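/- arXiv:0802.1406 — 10 statements merged into one kernel-verified Lean document; each statement's English description precedes it below -/
import Mathlib

section
/- Let U be a nonnegative real random variable that is stochastically lower bounded by a uniform variable on [0,1], i.e., for all t ∈ [0,1], P(U ≤ t) ≤ t. Let g : ℝ≥0 → ℝ≥0 be a nonincreasing function and set V = g(U). Then for every c > 0, E[ 1_{U ≤ c·g(U)} / g(U) ] ≤ c (with the convention that the integrand is 0 outside the indicator set). -/
open MeasureTheory ENNReal Set

/-!
Let `t` be the supremum of the set `A = {u ≥ 0 | u ≤ c g(u)}`, i.e. the point where the
increasing function `u` crosses the nonincreasing function `c g(u)`. Because `g` is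
nonincreasing, every `u, v ∈ A` satisfy `u ≤ c g(v)`, hence `t ≤ c g(v)` for all `v ∈ A`.
On the event `{U ≤ c g(U)}` the value `U` lies in `A`, so `U ≤ t` and `1 / g(U) ≤ c / t` there.
The expectation is thus at most `(c / t) P(U ≤ t) ≤ (c / t) min(t, 1) ≤ c` when `t > 0`, and
the event is null when `t ≤ 0` since `P(U ≤ 0) = 0`.
-/

section CrossingPoint

variable {g : ℝ → ℝ} {c u v : ℝ}

lemma le_mul_of_antitoneOn_of_le_mul (hg : AntitoneOn g (Ici 0)) (hc : 0 ≤ c)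
    (hu : 0 ≤ u) (hug : u ≤ c * g u) (hv : 0 ≤ v) (hvg : v ≤ c * g v) : u ≤ c * g v := by
  rcases le_total u v with huv | hvu
  · exact huv.trans hvg
  · exact hug.trans (mul_le_mul_of_nonneg_left (hg hv hu hvu) hc)

lemma bddAbove_setOf_le_mul (hg : AntitoneOn g (Ici 0)) (hc : 0 ≤ c) :
    BddAbove {u : ℝ | 0 ≤ u ∧ u ≤ c * g u} :=
  ⟨c * g 0, fun _ ⟨hu, hug⟩ ↦ hug.trans (mul_le_mul_of_nonneg_left (hg self_mem_Ici hu hu) hc)⟩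

noncomputable def crossingPoint (g : ℝ → ℝ) (c : ℝ) : ℝ :=
  sSup {u : ℝ | 0 ≤ u ∧ u ≤ c * g u}

lemma le_crossingPoint (hg : AntitoneOn g (Ici 0)) (hc : 0 ≤ c) (hv : 0 ≤ v)
    (hvg : v ≤ c * g v) : v ≤ crossingPoint g c :=
  le_csSup (bddAbove_setOf_le_mul hg hc) ⟨hv, hvg⟩

lemma crossingPoint_le_mul (hg : AntitoneOn g (Ici 0)) (hc : 0 ≤ c) (hv : 0 ≤ v)
    (hvg : v ≤ c * g v) : crossingPoint g c ≤ c * g v :=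
  csSup_le ⟨v, hv, hvg⟩ fun _ ⟨hu, hug⟩ ↦ le_mul_of_antitoneOn_of_le_mul hg hc hu hug hv hvg

end CrossingPoint

lemma ofReal_div_mul_measure_le_ofReal {Ω : Type*} [MeasurableSpace Ω] {P : Measure Ω}
    [IsProbabilityMeasure P] {U : Ω → ℝ}
    (hUnif : ∀ t : ℝ, 0 ≤ t → t ≤ 1 → P {ω | U ω ≤ t} ≤ ENNReal.ofReal t)
    {c t : ℝ} (hc : 0 ≤ c) (ht : 0 < t) :
    ENNReal.ofReal (c / t) * P {ω | U ω ≤ t} ≤ ENNReal.ofReal c := by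
  rcases le_total t 1 with ht1 | ht1
  · calc ENNReal.ofReal (c / t) * P {ω | U ω ≤ t}
        ≤ ENNReal.ofReal (c / t) * ENNReal.ofReal t := by gcongr; exact hUnif t ht.le ht1
      _ = ENNReal.ofReal c := by
        rw [← ENNReal.ofReal_mul (div_nonneg hc ht.le), div_mul_cancel₀ _ ht.ne']
  · calc ENNReal.ofReal (c / t) * P {ω | U ω ≤ t}
        ≤ ENNReal.ofReal (c / t) := mul_le_of_le_one_right' prob_le_one
      _ ≤ ENNReal.ofReal c := ENNReal.ofReal_le_ofReal (div_le_self hc ht1)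

theorem dependency_control_monotone_function_general
    {Ω : Type*} [MeasurableSpace Ω] (P : Measure Ω) [IsProbabilityMeasure P]
    (U : Ω → ℝ) (hUpos : ∀ ω, 0 ≤ U ω)
    (hUnif : ∀ t : ℝ, 0 ≤ t → t ≤ 1 → P {ω | U ω ≤ t} ≤ ENNReal.ofReal t)
    (g : ℝ → ℝ) (hmono : AntitoneOn g (Set.Ici 0))
    (c : ℝ) (hc : 0 < c) :
    ∫⁻ ω in {ω | U ω ≤ c * g (U ω) ∧ 0 < g (U ω)}, ENNReal.ofReal (g (U ω))⁻¹ ∂P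
      ≤ ENNReal.ofReal c := by
  set E := {ω | U ω ≤ c * g (U ω) ∧ 0 < g (U ω)}
  set t := crossingPoint g c
  have hE_le : E ⊆ {ω | U ω ≤ t} := fun ω hω ↦
    le_crossingPoint hmono hc.le (hUpos ω) hω.1
  have hE_ge : ∀ ω ∈ E, t ≤ c * g (U ω) := fun ω hω ↦
    crossingPoint_le_mul hmono hc.le (hUpos ω) hω.1
  rcases le_or_gt t 0 with ht | ht
  · have hU0 : P {ω | U ω ≤ 0} = 0 := by simpa using hUnif 0 le_rfl zero_le_one
    have hnull : P E = 0 := measure_mono_null (fun ω hω ↦ (hE_le hω).trans ht) hU0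
    simp [setLIntegral_measure_zero _ _ hnull]
  have hinv : ∀ ω ∈ E, ENNReal.ofReal (g (U ω))⁻¹ ≤ ENNReal.ofReal (c / t) := fun ω hω ↦ by
    refine ENNReal.ofReal_le_ofReal ?_
    rw [← inv_div]
    exact inv_anti₀ (div_pos ht hc) ((div_le_iff₀' hc).2 (hE_ge ω hω))
  calc ∫⁻ ω in E, ENNReal.ofReal (g (U ω))⁻¹ ∂P
      ≤ ∫⁻ _ in E, ENNReal.ofReal (c / t) ∂P := setLIntegral_mono measurable_const hinv
    _ = ENNReal.ofReal (c / t) * P E := setLIntegral_const _ _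
    _ ≤ ENNReal.ofReal (c / t) * P {ω | U ω ≤ t} := by gcongr
    _ ≤ ENNReal.ofReal c := ofReal_div_mul_measure_le_ofReal hUnif hc.le ht

/-- Part (i) of Lemma 3.2: if `U` is stochastically lower bounded by a uniform
variable on `[0,1]` and `g` is nonnegative nonincreasing, then for `V = g(U)`,
`E[1_{U ≤ c g(U)} / g(U)] ≤ c` for every `c > 0`. -/
theorem dependency_control_monotone_function
    {Ω : Type*} [MeasurableSpace Ω] (P : Measure Ω) [IsProbabilityMeasure P]
    (U : Ω → ℝ) (hU : Measurable U) (hUpos : ∀ ω, 0 ≤ U ω)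
    (hUnif : ∀ t : ℝ, 0 ≤ t → t ≤ 1 → P {ω | U ω ≤ t} ≤ ENNReal.ofReal t)
    (g : ℝ → ℝ) (hg : ∀ x, 0 ≤ g x) (hmono : AntitoneOn g (Set.Ici 0))
    (c : ℝ) (hc : 0 < c) :
    ∫⁻ ω in {ω | U ω ≤ c * g (U ω) ∧ 0 < g (U ω)}, ENNReal.ofReal (g (U ω))⁻¹ ∂P
      ≤ ENNReal.ofReal c :=
  dependency_control_monotone_function_general P U hUpos hUnif g hmono c hc
end

section
/- Let (U,V) be a couple of nonnegative real random variables such that P(U ≤ t) ≤ t for all t ∈ [0,1], and such that for every r ≥ 0 the function u ↦ P(V < r | U ≤ u) is nondecreasing in u (on the set where P(U ≤ u) > 0). Then for every c > 0, E[ 1_{U ≤ c V} / V ] ≤ c. -/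
open MeasureTheory ENNReal Set

/-! Slice `{V > 0}` into the geometric layers `q ^ n ≤ V < q ^ (n + 1)` (`q > 1`, `n ∈ ℤ`) and put
`ρ r = P(V < r | U ≤ c r)`, which is nondecreasing in `r` by the monotonicity hypothesis.
On the `n`-th layer `1 / V ≤ q ^ (-n)`, and the layer lies in `{U ≤ c q ^ (n + 1)}`, of mass at
most `c q ^ (n + 1)`; conditioning on that event and using the monotonicity once more bounds the
mass of the layer by `c q ^ (n + 1) (ρ (q ^ (n + 1)) - ρ (q ^ n))`. The contributions of the layers
telescope to at most `c q`, and letting `q → 1` gives `c`. -/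

open Filter ProbabilityTheory Topology

namespace ENNReal

theorem sum_Ico_sub_add_of_monotone {f : ℤ → ℝ≥0∞} (hf : Monotone f) {m M : ℤ} (hmM : m ≤ M) :
    ∑ n ∈ Finset.Ico m M, (f (n + 1) - f n) + f m = f M := by
  induction M, hmM using Int.leInduction with
  | base => simp
  | succ M hmM ih =>
    rw [← Finset.insert_Ico_right_eq_Ico_add_one hmM, Finset.sum_insert Finset.right_notMem_Ico,
      add_assoc, ih, tsub_add_cancel_of_le (hf (Int.le_add_one le_rfl))]

theorem tsum_sub_le_of_monotone {f : ℤ → ℝ≥0∞} (hf : Monotone f) {a : ℝ≥0∞}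
    (ha : ∀ n, f n ≤ a) : ∑' n, (f (n + 1) - f n) ≤ a := by
  rw [ENNReal.tsum_eq_iSup_sum' _ fun t => (tendsto_atTop.1 Finset.tendsto_Ico_neg t).exists]
  refine iSup_le fun N => ?_
  calc ∑ n ∈ Finset.Ico (-(N : ℤ)) N, (f (n + 1) - f n)
      ≤ ∑ n ∈ Finset.Ico (-(N : ℤ)) N, (f (n + 1) - f n) + f (-N) := le_self_add
    _ = f N := sum_Ico_sub_add_of_monotone hf (by omega)
    _ ≤ a := ha N

end ENNReal

section DependencyControl

variable {Ω : Type*} [MeasurableSpace Ω] {P : Measure Ω} {U V : Ω → ℝ} {c : ℝ}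

def SuperUniform (P : Measure Ω) (U : Ω → ℝ) : Prop :=
  ∀ t : ℝ, 0 ≤ t → t ≤ 1 → P {ω | U ω ≤ t} ≤ ENNReal.ofReal t

theorem SuperUniform.measure_le [IsProbabilityMeasure P] (hUnif : SuperUniform P U) {t : ℝ}
    (ht : 0 ≤ t) : P {ω | U ω ≤ t} ≤ ENNReal.ofReal t := by
  rcases le_total t 1 with h | h
  · exact hUnif t ht h
  · exact prob_le_one.trans (ENNReal.one_le_ofReal.2 h)

def StochDecreasingOnSublevels (P : Measure Ω) (U V : Ω → ℝ) : Prop :=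
  ∀ r, 0 ≤ r → MonotoneOn (fun u => P[{ω | V ω < r} | {ω | U ω ≤ u}]) (Ici 0)

theorem stochDecreasingOnSublevels_of_div_le (hU : Measurable U)
    (hdec : ∀ r : ℝ, 0 ≤ r → ∀ u u' : ℝ, 0 ≤ u → u ≤ u' → 0 < P {ω | U ω ≤ u} →
      P {ω | V ω < r ∧ U ω ≤ u} / P {ω | U ω ≤ u}
        ≤ P {ω | V ω < r ∧ U ω ≤ u'} / P {ω | U ω ≤ u'}) :
    StochDecreasingOnSublevels P U V := by
  intro r hr
  have cond_eq (u : ℝ) : P[{ω | V ω < r} | {ω | U ω ≤ u}]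
      = P {ω | V ω < r ∧ U ω ≤ u} / P {ω | U ω ≤ u} := by
    rw [cond_apply (measurableSet_le hU measurable_const), ENNReal.div_eq_inv_mul, inter_comm]
    rfl
  intro u hu u' _ huu'
  rcases eq_zero_or_pos (P {ω | U ω ≤ u}) with h0 | hpos
  · simp [cond_eq_zero_of_meas_eq_zero h0]
  · simpa only [cond_eq] using hdec r hr u u' hu huu' hpos

noncomputable def rayCondCdf (P : Measure Ω) (U V : Ω → ℝ) (c r : ℝ) : ℝ≥0∞ :=
  P[{ω | V ω < r} | {ω | U ω ≤ c * r}]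

theorem StochDecreasingOnSublevels.monotoneOn_rayCondCdf
    (hmono : StochDecreasingOnSublevels P U V) (hc : 0 ≤ c) :
    MonotoneOn (rayCondCdf P U V c) (Ici 0) := fun r hr r' hr' hrr' =>
  calc rayCondCdf P U V c r ≤ P[{ω | V ω < r} | {ω | U ω ≤ c * r'}] :=
        hmono r hr (mul_nonneg hc hr) (mul_nonneg hc hr') (mul_le_mul_of_nonneg_left hrr' hc)
    _ ≤ rayCondCdf P U V c r' := measure_mono fun _ (h : _ < r) => h.trans_le hrr'

theorem StochDecreasingOnSublevels.measure_le_and_mem_Ico_le [IsFiniteMeasure P]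
    (hmono : StochDecreasingOnSublevels P U V) (hU : Measurable U) (hV : Measurable V)
    (hc : 0 ≤ c) {a b : ℝ} (ha : 0 ≤ a) (hab : a ≤ b) :
    P {ω | U ω ≤ c * b ∧ V ω ∈ Ico a b}
      ≤ (rayCondCdf P U V c b - rayCondCdf P U V c a) * P {ω | U ω ≤ c * b} := by
  set s := {ω | U ω ≤ c * b}
  have hs : MeasurableSet s := measurableSet_le hU measurable_const
  have hsub : {ω | V ω < a} ⊆ {ω | V ω < b} := fun _ (h : _ < a) => h.trans_le hab
  calc P {ω | U ω ≤ c * b ∧ V ω ∈ Ico a b}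
      = P[{ω | V ω < b} \ {ω | V ω < a} | s] * P s := by
        rw [cond_mul_eq_inter hs]
        congr 1
        ext ω
        simp only [s, mem_inter_iff, Set.mem_sdiff, mem_ofPred_eq, mem_Ico, not_lt]
        tauto
    _ = (P[{ω | V ω < b} | s] - P[{ω | V ω < a} | s]) * P s := by
        rw [measure_sdiff hsub (measurableSet_lt hV measurable_const).nullMeasurableSet
          (measure_ne_top _ _)]
    _ ≤ (rayCondCdf P U V c b - rayCondCdf P U V c a) * P s := by
        gcongr
        · exact le_rfl
        · exact hmono a ha (mul_nonneg hc ha) (mul_nonneg hc (ha.trans hab))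
            (mul_le_mul_of_nonneg_left hab hc)

theorem StochDecreasingOnSublevels.setLIntegral_inv_Ico_le [IsProbabilityMeasure P]
    (hmono : StochDecreasingOnSublevels P U V) (hU : Measurable U) (hV : Measurable V)
    (hUnif : SuperUniform P U) (hc : 0 ≤ c) {a b : ℝ} (ha : 0 < a) (hab : a ≤ b) :
    ∫⁻ ω in {ω | U ω ≤ c * V ω ∧ V ω ∈ Ico a b}, ENNReal.ofReal (V ω)⁻¹ ∂P
      ≤ ENNReal.ofReal (c * b / a) * (rayCondCdf P U V c b - rayCondCdf P U V c a) := by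
  set A := {ω | U ω ≤ c * V ω ∧ V ω ∈ Ico a b}
  have hA : MeasurableSet A :=
    (measurableSet_le hU (hV.const_mul c)).inter (hV measurableSet_Ico)
  have hAsub : A ⊆ {ω | U ω ≤ c * b ∧ V ω ∈ Ico a b} := fun ω ⟨hUV, hVab⟩ =>
    ⟨hUV.trans (mul_le_mul_of_nonneg_left hVab.2.le hc), hVab⟩
  calc ∫⁻ ω in A, ENNReal.ofReal (V ω)⁻¹ ∂P
      ≤ ∫⁻ _ in A, ENNReal.ofReal a⁻¹ ∂P :=
        setLIntegral_mono' hA fun ω hω => ENNReal.ofReal_le_ofReal (inv_anti₀ ha hω.2.1)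
    _ = ENNReal.ofReal a⁻¹ * P A := setLIntegral_const _ _
    _ ≤ ENNReal.ofReal a⁻¹
          * ((rayCondCdf P U V c b - rayCondCdf P U V c a) * ENNReal.ofReal (c * b)) := by
        gcongr
        calc P A ≤ P {ω | U ω ≤ c * b ∧ V ω ∈ Ico a b} := measure_mono hAsub
          _ ≤ (rayCondCdf P U V c b - rayCondCdf P U V c a) * P {ω | U ω ≤ c * b} :=
            hmono.measure_le_and_mem_Ico_le hU hV hc ha.le hab
          _ ≤ _ := by
            gcongr
            exact hUnif.measure_le (mul_nonneg hc (ha.le.trans hab))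
    _ = _ := by
        rw [mul_left_comm, ← ENNReal.ofReal_mul (inv_nonneg.2 ha.le), mul_comm, inv_mul_eq_div]

theorem StochDecreasingOnSublevels.setLIntegral_inv_le_mul_of_one_lt [IsProbabilityMeasure P]
    (hmono : StochDecreasingOnSublevels P U V) (hU : Measurable U) (hV : Measurable V)
    (hUnif : SuperUniform P U) (hc : 0 ≤ c) {q : ℝ} (hq : 1 < q) :
    ∫⁻ ω in {ω | U ω ≤ c * V ω ∧ 0 < V ω}, ENNReal.ofReal (V ω)⁻¹ ∂P
      ≤ ENNReal.ofReal (c * q) := by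
  have hq0 : 0 < q := one_pos.trans hq
  set ρ : ℤ → ℝ≥0∞ := fun n => rayCondCdf P U V c (q ^ n)
  have hρ : Monotone ρ := fun m n hmn =>
    hmono.monotoneOn_rayCondCdf hc (zpow_pos hq0 m).le (zpow_pos hq0 n).le
      (zpow_le_zpow_right₀ hq.le hmn)
  set layer : ℤ → Set Ω := fun n => {ω | U ω ≤ c * V ω ∧ V ω ∈ Ico (q ^ n) (q ^ (n + 1))}
  have hcover : {ω | U ω ≤ c * V ω ∧ 0 < V ω} ⊆ ⋃ n, layer n := fun ω ⟨hUV, hV0⟩ =>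
    mem_iUnion.2 ((exists_mem_Ico_zpow hV0 hq).imp fun _ hn => ⟨hUV, hn⟩)
  have hlayer (n : ℤ) : ∫⁻ ω in layer n, ENNReal.ofReal (V ω)⁻¹ ∂P
      ≤ ENNReal.ofReal (c * q) * (ρ (n + 1) - ρ n) := by
    have hratio : c * q ^ (n + 1) / q ^ n = c * q := by
      rw [zpow_add_one₀ hq0.ne']
      field_simp
    simpa only [hratio] using hmono.setLIntegral_inv_Ico_le hU hV hUnif hc (zpow_pos hq0 n)
      (zpow_le_zpow_right₀ hq.le (Int.le_add_one le_rfl))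
  calc ∫⁻ ω in {ω | U ω ≤ c * V ω ∧ 0 < V ω}, ENNReal.ofReal (V ω)⁻¹ ∂P
      ≤ ∫⁻ ω in ⋃ n, layer n, ENNReal.ofReal (V ω)⁻¹ ∂P := lintegral_mono_set hcover
    _ ≤ ∑' n, ∫⁻ ω in layer n, ENNReal.ofReal (V ω)⁻¹ ∂P := lintegral_iUnion_le _ _
    _ ≤ ∑' n, ENNReal.ofReal (c * q) * (ρ (n + 1) - ρ n) := ENNReal.tsum_le_tsum hlayer
    _ = ENNReal.ofReal (c * q) * ∑' n, (ρ (n + 1) - ρ n) := ENNReal.tsum_mul_left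
    _ ≤ ENNReal.ofReal (c * q) := by
        grw [ENNReal.tsum_sub_le_of_monotone hρ fun _ => prob_le_one, mul_one]

end DependencyControl

theorem dependency_control_stochastically_decreasing_general
    {Ω : Type*} [MeasurableSpace Ω] (P : Measure Ω) [IsProbabilityMeasure P]
    (U V : Ω → ℝ) (hU : Measurable U) (hV : Measurable V)
    (hUnif : ∀ t : ℝ, 0 ≤ t → t ≤ 1 → P {ω | U ω ≤ t} ≤ ENNReal.ofReal t)
    (hdec : ∀ r : ℝ, 0 ≤ r → ∀ u u' : ℝ, 0 ≤ u → u ≤ u' →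
      0 < P {ω | U ω ≤ u} →
      P {ω | V ω < r ∧ U ω ≤ u} / P {ω | U ω ≤ u}
        ≤ P {ω | V ω < r ∧ U ω ≤ u'} / P {ω | U ω ≤ u'})
    (c : ℝ) (hc : 0 < c) :
    ∫⁻ ω in {ω | U ω ≤ c * V ω ∧ 0 < V ω}, ENNReal.ofReal (V ω)⁻¹ ∂P
      ≤ ENNReal.ofReal c := by
  have hmono := stochDecreasingOnSublevels_of_div_le hU hdec
  have hlim : Tendsto (fun q => ENNReal.ofReal (c * q)) (𝓝[>] 1) (𝓝 (ENNReal.ofReal c)) := by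
    refine (ENNReal.tendsto_ofReal ?_).mono_left nhdsWithin_le_nhds
    simpa using (continuous_const_mul c).tendsto 1
  exact ge_of_tendsto hlim (eventually_nhdsWithin_of_forall fun q hq =>
    hmono.setLIntegral_inv_le_mul_of_one_lt hU hV hUnif hc.le hq)

/-- Part (ii) of Lemma 3.2: if `U` is stochastically lower bounded by a uniform
variable on `[0,1]` and the conditional distribution of `V` given `{U ≤ u}` is
stochastically decreasing in `u`, then `E[1_{U ≤ c V} / V] ≤ c` for all `c > 0`. -/
theorem dependency_control_stochastically_decreasing
    {Ω : Type*} [MeasurableSpace Ω] (P : Measure Ω) [IsProbabilityMeasure P]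
    (U V : Ω → ℝ) (hU : Measurable U) (hV : Measurable V)
    (hUpos : ∀ ω, 0 ≤ U ω) (hVpos : ∀ ω, 0 ≤ V ω)
    (hUnif : ∀ t : ℝ, 0 ≤ t → t ≤ 1 → P {ω | U ω ≤ t} ≤ ENNReal.ofReal t)
    (hdec : ∀ r : ℝ, 0 ≤ r → ∀ u u' : ℝ, 0 ≤ u → u ≤ u' →
      0 < P {ω | U ω ≤ u} →
      P {ω | V ω < r ∧ U ω ≤ u} / P {ω | U ω ≤ u}
        ≤ P {ω | V ω < r ∧ U ω ≤ u'} / P {ω | U ω ≤ u'})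
    (c : ℝ) (hc : 0 < c) :
    ∫⁻ ω in {ω | U ω ≤ c * V ω ∧ 0 < V ω}, ENNReal.ofReal (V ω)⁻¹ ∂P
      ≤ ENNReal.ofReal c :=
  dependency_control_stochastically_decreasing_general P U V hU hV hUnif hdec c hc
end

section
/- Let ν be a probability measure on (0, ∞) and define the shape function β_ν(r) = ∫_0^r x dν(x) = ∫ x·1_{x ≤ r} dν(x). Let U be a nonnegative random variable with P(U ≤ t) ≤ t for all t ∈ [0,1], and let V be any nonnegative random variable (with arbitrary joint distribution with U). Then for every c > 0, E[ 1_{U ≤ c·β_ν(V)} / V ] ≤ c. -/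
open MeasureTheory ENNReal Set

/-!
Layer cake: `E[1_A / V] = ∫_0^∞ P(A ∩ {V ≤ 1/t}) dt` with `A = {U ≤ c β(V), V > 0}`. On
`A ∩ {V ≤ 1/t}` monotonicity of `β` gives `U ≤ c β(1/t)`, so super-uniformity of `U` bounds the
integrand by `c β(1/t)`, whatever the joint law of `(U, V)`. Finally, by Tonelli,
`∫_0^∞ β(1/t) dt = ∫ x · |{t > 0 : t ≤ 1/x}| dν(x) = ν(0, ∞) ≤ 1`.
-/

noncomputable def shapeFunction (ν : Measure ℝ) (r : ℝ) : ℝ := ∫ x in Ioc 0 r, x ∂ν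

section ShapeFunction

variable (ν : Measure ℝ)

lemma shapeFunction_nonneg (r : ℝ) : 0 ≤ shapeFunction ν r :=
  setIntegral_nonneg measurableSet_Ioc fun _ hx => hx.1.le

lemma integrableOn_id_Ioc [IsFiniteMeasure ν] (r : ℝ) :
    IntegrableOn (fun x : ℝ => x) (Ioc 0 r) ν := by
  refine Integrable.mono' (integrable_const r) aestronglyMeasurable_id ?_
  filter_upwards [ae_restrict_mem measurableSet_Ioc] with x hx
  rw [Real.norm_eq_abs, abs_of_pos hx.1]
  exact hx.2

lemma monotone_shapeFunction [IsFiniteMeasure ν] : Monotone (shapeFunction ν) := fun _ s hrs =>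
  setIntegral_mono_set (integrableOn_id_Ioc ν s)
    ((ae_restrict_mem measurableSet_Ioc).mono fun _ hx => hx.1.le)
    (Filter.Eventually.of_forall (Ioc_subset_Ioc_right hrs))

lemma ofReal_shapeFunction [IsFiniteMeasure ν] (r : ℝ) :
    ENNReal.ofReal (shapeFunction ν r) = ∫⁻ x in Ioc 0 r, ENNReal.ofReal x ∂ν :=
  ofReal_integral_eq_lintegral_ofReal (integrableOn_id_Ioc ν r)
    ((ae_restrict_mem measurableSet_Ioc).mono fun _ hx => hx.1.le)

lemma lintegral_Ioi_indicator_Ioc_inv (x : ℝ) :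
    ∫⁻ t in Ioi 0, (Ioc 0 t⁻¹).indicator ENNReal.ofReal x = (Ioi 0).indicator 1 x := by
  rcases le_or_gt x 0 with hx | hx
  · simp [indicator_of_notMem, not_lt.2 hx]
  · have hsection : ∀ t ∈ Ioi (0 : ℝ), (Ioc 0 t⁻¹).indicator ENNReal.ofReal x
        = (Ioc 0 x⁻¹).indicator (fun _ => ENNReal.ofReal x) t := fun t ht => by
      simp only [indicator, mem_Ioc, hx, true_and, ht.out, le_inv_comm₀ hx ht.out]
    rw [setLIntegral_congr_fun measurableSet_Ioi hsection, lintegral_indicator measurableSet_Ioc,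
      setLIntegral_const, Measure.restrict_apply measurableSet_Ioc,
      inter_eq_left.2 Ioc_subset_Ioi_self, Real.volume_Ioc, sub_zero, ← ofReal_mul hx.le,
      mul_inv_cancel₀ hx.ne']
    simp [hx]

theorem lintegral_ofReal_shapeFunction_inv [IsFiniteMeasure ν] :
    ∫⁻ t in Ioi 0, ENNReal.ofReal (shapeFunction ν t⁻¹) = ν (Ioi 0) := by
  have hmeas :
      Measurable (Function.uncurry fun t x : ℝ => (Ioc 0 t⁻¹).indicator ENNReal.ofReal x) :=
    (measurable_ofReal.comp measurable_snd).ite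
      ((measurableSet_lt measurable_const measurable_snd).inter
        (measurableSet_le measurable_snd measurable_fst.inv)) measurable_const
  simp_rw [ofReal_shapeFunction, ← lintegral_indicator measurableSet_Ioc]
  rw [lintegral_lintegral_swap hmeas.aemeasurable]
  simp_rw [lintegral_Ioi_indicator_Ioc_inv]
  rw [lintegral_indicator measurableSet_Ioi]
  simp

end ShapeFunction

section SuperUniform

variable {Ω : Type*} [MeasurableSpace Ω]

/-- `U` is stochastically larger than a uniform variable on `[0, 1]`. -/
def IsSuperUniform (P : Measure Ω) (U : Ω → ℝ) : Prop :=
  ∀ t : ℝ, 0 ≤ t → t ≤ 1 → P {ω | U ω ≤ t} ≤ ENNReal.ofReal t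

variable {P : Measure Ω} [IsProbabilityMeasure P] {U : Ω → ℝ}

lemma IsSuperUniform.measure_le_le_ofReal (hU : IsSuperUniform P U) {t : ℝ} (ht : 0 ≤ t) :
    P {ω | U ω ≤ t} ≤ ENNReal.ofReal t := by
  rcases le_or_gt t 1 with ht1 | ht1
  · exact hU t ht ht1
  · exact prob_le_one.trans (by simpa using ofReal_le_ofReal ht1.le)

theorem IsSuperUniform.setLIntegral_inv_le (hU : IsSuperUniform P U) {V : Ω → ℝ}
    (hV : Measurable V) (hV_nonneg : ∀ ω, 0 ≤ V ω) {f : ℝ → ℝ} (hf : Monotone f)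
    (hf_nonneg : ∀ r, 0 ≤ f r) :
    ∫⁻ ω in {ω | U ω ≤ f (V ω) ∧ 0 < V ω}, ENNReal.ofReal (V ω)⁻¹ ∂P
      ≤ ∫⁻ t in Ioi 0, ENNReal.ofReal (f t⁻¹) := by
  set A := {ω | U ω ≤ f (V ω) ∧ 0 < V ω}
  rw [lintegral_eq_lintegral_meas_le _ (.of_forall fun ω => inv_nonneg.2 (hV_nonneg ω))
    hV.inv.aemeasurable]
  refine setLIntegral_mono (measurable_ofReal.comp (hf.measurable.comp measurable_inv))
    fun t (ht : 0 < t) => ?_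
  have hslice : {ω | t ≤ (V ω)⁻¹} ∩ A ⊆ {ω | U ω ≤ f t⁻¹} := by
    rintro ω ⟨htV, hUV, hVpos⟩
    exact hUV.trans (hf ((le_inv_comm₀ ht hVpos).1 htV))
  calc (P.restrict A) {ω | t ≤ (V ω)⁻¹}
      = P ({ω | t ≤ (V ω)⁻¹} ∩ A) :=
        Measure.restrict_apply (measurableSet_le measurable_const hV.inv)
    _ ≤ P {ω | U ω ≤ f t⁻¹} := measure_mono hslice
    _ ≤ ENNReal.ofReal (f t⁻¹) := hU.measure_le_le_ofReal (hf_nonneg _)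

end SuperUniform

theorem dependency_control_arbitrary_dependence_general
    {Ω : Type*} [MeasurableSpace Ω] (P : Measure Ω) [IsProbabilityMeasure P]
    (U V : Ω → ℝ) (hV : Measurable V)
    (hVpos : ∀ ω, 0 ≤ V ω)
    (hUnif : ∀ t : ℝ, 0 ≤ t → t ≤ 1 → P {ω | U ω ≤ t} ≤ ENNReal.ofReal t)
    (ν : Measure ℝ) [IsProbabilityMeasure ν]
    (β : ℝ → ℝ) (hβ : ∀ r : ℝ, β r = ∫ x in Set.Ioc 0 r, x ∂ν)
    (c : ℝ) (hc : 0 < c) :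
    ∫⁻ ω in {ω | U ω ≤ c * β (V ω) ∧ 0 < V ω}, ENNReal.ofReal (V ω)⁻¹ ∂P
      ≤ ENNReal.ofReal c := by
  obtain rfl : β = shapeFunction ν := funext hβ
  calc _ ≤ ∫⁻ t in Ioi 0, ENNReal.ofReal (c * shapeFunction ν t⁻¹) :=
        IsSuperUniform.setLIntegral_inv_le hUnif hV hVpos
          ((monotone_shapeFunction ν).const_mul hc.le)
          fun r => mul_nonneg hc.le (shapeFunction_nonneg ν r)
    _ = ENNReal.ofReal c * ν (Ioi 0) := by
        simp_rw [ofReal_mul hc.le]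
        rw [lintegral_const_mul' _ _ ofReal_ne_top, lintegral_ofReal_shapeFunction_inv]
    _ ≤ ENNReal.ofReal c := mul_le_of_le_one_right' prob_le_one

/-- Part (iii) of Lemma 3.2: for a shape function `β_ν(r) = ∫_{(0,r]} x dν(x)`
associated to a probability measure `ν` on `(0,∞)`, and any nonnegative random
variable `V`, if `U` is stochastically lower bounded by a uniform variable on
`[0,1]` then `E[1_{U ≤ c β_ν(V)} / V] ≤ c` for all `c > 0`. -/
theorem dependency_control_arbitrary_dependence
    {Ω : Type*} [MeasurableSpace Ω] (P : Measure Ω) [IsProbabilityMeasure P]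
    (U V : Ω → ℝ) (hU : Measurable U) (hV : Measurable V)
    (hUpos : ∀ ω, 0 ≤ U ω) (hVpos : ∀ ω, 0 ≤ V ω)
    (hUnif : ∀ t : ℝ, 0 ≤ t → t ≤ 1 → P {ω | U ω ≤ t} ≤ ENNReal.ofReal t)
    (ν : Measure ℝ) [IsProbabilityMeasure ν] (hν : ν (Set.Iic 0) = 0)
    (β : ℝ → ℝ) (hβ : ∀ r : ℝ, β r = ∫ x in Set.Ioc 0 r, x ∂ν)
    (c : ℝ) (hc : 0 < c) :
    ∫⁻ ω in {ω | U ω ≤ c * β (V ω) ∧ 0 < V ω}, ENNReal.ofReal (V ω)⁻¹ ∂P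
      ≤ ENNReal.ofReal c :=
  dependency_control_arbitrary_dependence_general P U V hV hVpos hUnif ν β hβ c hc
end

section
/- Let H be a finite set of hypotheses, Λ : H → ℝ>0 a positive weight (volume) function with |S| := Σ_{h∈S} Λ(h) for S ⊆ H, and H₀ ⊆ H the set of true nulls. Let π : H → [0,1], α > 0, and β : ℝ≥0 → ℝ≥0 nondecreasing. Let R be a random subset of H (a measurable function of the data) and (p_h)_{h∈H} random variables in [0,1]. Assume: (i) almost surely, every h ∈ R satisfies p_h ≤ α π(h) β(|R|); (ii) for every h ∈ H₀ and every c > 0, E[ 1_{p_h ≤ c β(|R|)} / |R| ] ≤ c. Then FDR(R) := E[ (|R ∩ H₀| / |R|) · 1_{|R| > 0} ] ≤ α · Σ_{h ∈ H₀} Λ(h) π(h). -/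
open MeasureTheory ENNReal Set Finset

/-- Proposition 2.7: self-consistency plus dependency control imply FDR control.
`vol S = Σ_{h∈S} Λ h` is the Λ-volume; condition (i) is SC(α,π,β), condition
(ii) is DC(β) for each pair `(p_h, |R|)` with `h ∈ H₀`; the conclusion is
`FDR(R) ≤ α Σ_{h∈H₀} Λ(h) π(h)`. -/
theorem self_consistency_and_dependency_control_imply_FDR_control
    {Ω : Type*} [MeasurableSpace Ω] (P : Measure Ω) [IsProbabilityMeasure P]
    {ι : Type*} [Fintype ι] [DecidableEq ι]
    (H₀ : Finset ι) (Λ : ι → ℝ) (hΛ : ∀ h, 0 < Λ h)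
    (π : ι → ℝ) (hπ : ∀ h, π h ∈ Set.Icc (0:ℝ) 1)
    (α : ℝ) (hα : 0 < α)
    (β : ℝ → ℝ) (hβ0 : ∀ r, 0 ≤ β r) (hβmono : Monotone β)
    (p : ι → Ω → ℝ) (hp : ∀ h, Measurable (p h))
    (hprange : ∀ h ω, p h ω ∈ Set.Icc (0:ℝ) 1)
    (R : Ω → Finset ι) (hRmeas : ∀ h, MeasurableSet {ω | h ∈ R ω})
    -- (i) self-consistency condition SC(α, π, β)
    (hSC : ∀ᵐ ω ∂P, ∀ h ∈ R ω, p h ω ≤ α * π h * β (∑ g ∈ R ω, Λ g))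
    -- (ii) dependency control condition DC(β) for (p_h, |R|), h ∈ H₀
    (hDC : ∀ h ∈ H₀, ∀ c : ℝ, 0 < c →
      ∫⁻ ω in {ω | p h ω ≤ c * β (∑ g ∈ R ω, Λ g) ∧ 0 < ∑ g ∈ R ω, Λ g},
        ENNReal.ofReal (∑ g ∈ R ω, Λ g)⁻¹ ∂P ≤ ENNReal.ofReal c) :
    ∫⁻ ω, ENNReal.ofReal
        (if 0 < ∑ g ∈ R ω, Λ g
          then (∑ g ∈ R ω ∩ H₀, Λ g) / (∑ g ∈ R ω, Λ g) else 0) ∂P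
      ≤ ENNReal.ofReal (α * ∑ h ∈ H₀, Λ h * π h) := by
  classical
  letI : MeasurableSpace (Finset ι) := ⊤
  set s : Ω → ℝ := fun ω => ∑ g ∈ R ω, Λ g with hs
  have hR : Measurable R := by
    apply measurable_to_countable'
    intro F
    have hset : R ⁻¹' {F} = ⋂ h : ι, {ω | h ∈ R ω ↔ h ∈ F} := by
      ext ω
      simp [Finset.ext_iff]
    rw [hset]
    refine MeasurableSet.iInter fun h => ?_
    by_cases hF : h ∈ F
    · simpa [hF] using hRmeas h
    · simp only [hF, iff_false]
      exact (hRmeas h).compl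
  have hsmeas : Measurable s := by
    have : Measurable (fun F : Finset ι => ∑ g ∈ F, Λ g) := measurable_from_top
    exact this.comp hR
  have hβsmeas : Measurable (fun ω => β (s ω)) := by
    have : Measurable (fun F : Finset ι => β (∑ g ∈ F, Λ g)) := measurable_from_top
    exact this.comp hR
  set A : ι → Set Ω := fun h => {ω | p h ω ≤ α * π h * β (s ω) ∧ 0 < s ω} with hA
  have hAmeas : ∀ h, MeasurableSet (A h) := fun h =>
    ((measurableSet_le (hp h) (hβsmeas.const_mul _))).inter
      (measurableSet_lt measurable_const hsmeas)
  set g : Ω → ℝ≥0∞ := fun ω => ENNReal.ofReal (s ω)⁻¹ with hg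
  have hgmeas : Measurable g := ENNReal.measurable_ofReal.comp hsmeas.inv
  set F : ι → Ω → ℝ≥0∞ := fun h ω => ENNReal.ofReal (Λ h) * (A h).indicator g ω with hF
  have hFmeas : ∀ h, Measurable (F h) := fun h =>
    (hgmeas.indicator (hAmeas h)).const_mul _
  -- pointwise bound
  have step1 : ∫⁻ ω, ENNReal.ofReal
        (if 0 < s ω then (∑ g ∈ R ω ∩ H₀, Λ g) / (s ω) else 0) ∂P
      ≤ ∫⁻ ω, ∑ h ∈ H₀, F h ω ∂P := by
    refine lintegral_mono_ae ?_
    filter_upwards [hSC] with ω hω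
    by_cases hpos : 0 < s ω
    · rw [if_pos hpos]
      have key : (∑ g ∈ R ω ∩ H₀, Λ g) / s ω
          = ∑ h ∈ H₀, (if h ∈ R ω then Λ h / s ω else 0) := by
        have h1 : R ω ∩ H₀ = H₀.filter (fun h => h ∈ R ω) := by
          ext x; simp [Finset.mem_filter, and_comm]
        rw [h1, Finset.sum_filter, Finset.sum_div]
        refine Finset.sum_congr rfl fun h _ => ?_
        split <;> simp
      rw [key, ENNReal.ofReal_sum_of_nonneg]
      · refine Finset.sum_le_sum fun h hh => ?_
        by_cases hhR : h ∈ R ω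
        · have hωA : ω ∈ A h := ⟨hω h hhR, hpos⟩
          simp only [if_pos hhR, hF, Set.indicator_of_mem hωA, hg]
          rw [← ENNReal.ofReal_mul (hΛ h).le, div_eq_mul_inv]
        · simp [if_neg hhR]
      · intro h _
        split
        · exact div_nonneg (hΛ h).le hpos.le
        · exact le_rfl
    · rw [if_neg hpos]
      simp
  -- sum of integrals
  have step2 : ∫⁻ ω, ∑ h ∈ H₀, F h ω ∂P = ∑ h ∈ H₀, ∫⁻ ω, F h ω ∂P :=
    lintegral_finset_sum _ fun h _ => hFmeas h
  -- each integral
  have step3 : ∀ h ∈ H₀, ∫⁻ ω, F h ω ∂P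
      ≤ ENNReal.ofReal (Λ h) * ENNReal.ofReal (α * π h) := by
    intro h hh
    have hint : ∫⁻ ω, F h ω ∂P
        = ENNReal.ofReal (Λ h) * ∫⁻ ω in A h, g ω ∂P := by
      rw [hF]
      rw [lintegral_const_mul _ (hgmeas.indicator (hAmeas h)),
        lintegral_indicator (hAmeas h)]
    rw [hint]
    refine mul_le_mul_right ?_ _
    rcases (hπ h).1.lt_or_eq with hπpos | hπ0
    · exact hDC h hh (α * π h) (mul_pos hα hπpos)
    · have hz : ENNReal.ofReal (α * π h) = 0 := by
        rw [← hπ0]; simp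
      rw [hz]
      rw [← nonpos_iff_eq_zero] at *
      refine ENNReal.le_of_forall_pos_le_add fun ε hε _ => ?_
      have hsub : A h ⊆ {ω | p h ω ≤ (ε : ℝ) * β (s ω) ∧ 0 < s ω} := by
        intro ω hω
        refine ⟨?_, hω.2⟩
        have : p h ω ≤ 0 := by
          have := hω.1
          rw [← hπ0] at this
          simpa using this
        exact this.trans (mul_nonneg ε.coe_nonneg (hβ0 _))
      calc ∫⁻ ω in A h, g ω ∂P ≤ ∫⁻ ω in {ω | p h ω ≤ (ε : ℝ) * β (s ω) ∧ 0 < s ω}, g ω ∂P :=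
            lintegral_mono_set hsub
        _ ≤ ENNReal.ofReal (ε : ℝ) := hDC h hh (ε : ℝ) (by exact_mod_cast hε)
        _ = (ε : ℝ≥0∞) := ENNReal.ofReal_coe_nnreal
        _ ≤ 0 + ε := by simp
  -- combine
  calc ∫⁻ ω, ENNReal.ofReal
        (if 0 < s ω then (∑ g ∈ R ω ∩ H₀, Λ g) / (s ω) else 0) ∂P
      ≤ ∑ h ∈ H₀, ∫⁻ ω, F h ω ∂P := step2 ▸ step1
    _ ≤ ∑ h ∈ H₀, ENNReal.ofReal (Λ h) * ENNReal.ofReal (α * π h) :=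
        Finset.sum_le_sum step3
    _ = ENNReal.ofReal (α * ∑ h ∈ H₀, Λ h * π h) := by
        have e1 : ∀ h ∈ H₀, ENNReal.ofReal (Λ h) * ENNReal.ofReal (α * π h)
            = ENNReal.ofReal (Λ h * (α * π h)) :=
          fun h _ => (ENNReal.ofReal_mul (hΛ h).le).symm
        rw [Finset.sum_congr rfl e1, ← ENNReal.ofReal_sum_of_nonneg
          (fun h _ => mul_nonneg (hΛ h).le (mul_nonneg hα.le (hπ h).1))]
        congr 1
        rw [Finset.mul_sum]
        exact Finset.sum_congr rfl fun h _ => by ring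
end

section
/- Let H be a finite set, Δ : H × ℝ≥0 → ℝ≥0 with Δ(h, ·) nondecreasing for each h, and for a vector of p-values p ∈ [0,1]^H define L_Δ(r) = { h ∈ H : p_h ≤ Δ(h, r) } and |S| = Σ_{h∈S} Λ(h) for a positive weight Λ. Let r̂ := max { r ≥ 0 : |L_Δ(r)| ≥ r }. Then: (a) the maximum r̂ exists and |L_Δ(r̂)| = r̂; (b) L_Δ(r̂) equals the union of all subsets A ⊆ H satisfying A ⊆ L_Δ(|A|); in particular L_Δ(r̂) itself satisfies the self-consistency inclusion L_Δ(r̂) ⊆ L_Δ(|L_Δ(r̂)|) with equality of volumes. -/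
open Finset

/-- Definition 3.1 / its justification: for a threshold collection `Δ(h,·)`
nondecreasing, the set `{r ≥ 0 : |L_Δ(r)| ≥ r}` has a maximum `rhat` with
`|L_Δ(rhat)| = rhat`, and `L_Δ(rhat)` is the union of all self-consistent subsets
`A ⊆ L_Δ(|A|)`. -/
theorem step_up_max_exists_and_is_union_of_self_consistent
    {ι : Type*} [Fintype ι] [DecidableEq ι]
    (Λ : ι → ℝ) (hΛ : ∀ h, 0 < Λ h)
    (p : ι → ℝ) (hp : ∀ h, p h ∈ Set.Icc (0:ℝ) 1)
    (Δ : ι → ℝ → ℝ) (hΔ : ∀ h, MonotoneOn (Δ h) (Set.Ici 0)) :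
    ∃ rhat : ℝ, 0 ≤ rhat ∧
      -- rhat is the maximum of {r ≥ 0 : |L_Δ(r)| ≥ r}
      (∑ h ∈ Finset.univ.filter (fun h => p h ≤ Δ h rhat), Λ h) = rhat ∧
      (∀ r : ℝ, 0 ≤ r →
        r ≤ ∑ h ∈ Finset.univ.filter (fun h => p h ≤ Δ h r), Λ h → r ≤ rhat) ∧
      -- L_Δ(rhat) is the union of all self-consistent subsets
      (∀ h : ι, h ∈ Finset.univ.filter (fun h => p h ≤ Δ h rhat) ↔
        ∃ A : Finset ι,
          (∀ g ∈ A, p g ≤ Δ g (∑ g' ∈ A, Λ g')) ∧ h ∈ A) := by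
  classical
  -- volume of a set
  set vol : Finset ι → ℝ := fun A => ∑ g ∈ A, Λ g with hvol
  have volnn : ∀ A, 0 ≤ vol A := fun A =>
    Finset.sum_nonneg (fun g _ => (hΛ g).le)
  have volmono : ∀ {A B : Finset ι}, A ⊆ B → vol A ≤ vol B := by
    intro A B hAB
    exact Finset.sum_le_sum_of_subset_of_nonneg hAB (fun g _ _ => (hΛ g).le)
  -- the family of self-consistent sets
  set SC : Finset (Finset ι) :=
    Finset.univ.filter (fun A : Finset ι => ∀ g ∈ A, p g ≤ Δ g (vol A)) with hSC
  set U : Finset ι := SC.sup id with hU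
  have memU : ∀ g : ι, g ∈ U ↔ ∃ A ∈ SC, g ∈ A := by
    intro g
    simp [hU, Finset.mem_sup]
  have memSC : ∀ A : Finset ι, A ∈ SC ↔ ∀ g ∈ A, p g ≤ Δ g (vol A) := by
    intro A; simp [hSC]
  -- any self-consistent set is contained in U
  have subU : ∀ A ∈ SC, A ⊆ U := by
    intro A hA g hg
    exact (memU g).2 ⟨A, hA, hg⟩
  -- U is self-consistent
  have hUSC : U ∈ SC := by
    rw [memSC]
    intro g hg
    obtain ⟨A, hA, hgA⟩ := (memU g).1 hg
    have h1 := (memSC A).1 hA g hgA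
    exact h1.trans (hΔ g (volnn A) (volnn U) (volmono (subU A hA)))
  set rhat : ℝ := vol U with hrhat
  have hrnn : 0 ≤ rhat := volnn U
  -- L(rhat)
  set L : Finset ι := Finset.univ.filter (fun h => p h ≤ Δ h rhat) with hL
  have hUL : U ⊆ L := by
    intro g hg
    simp only [hL, Finset.mem_filter, Finset.mem_univ, true_and]
    exact (memSC U).1 hUSC g hg
  have hLSC : L ∈ SC := by
    rw [memSC]
    intro g hg
    rw [hL, Finset.mem_filter] at hg
    exact hg.2.trans (hΔ g hrnn (volnn L) (volmono hUL))
  have hLU : L ⊆ U := subU L hLSC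
  have hLeqU : L = U := Finset.Subset.antisymm hLU hUL
  refine ⟨rhat, hrnn, ?_, ?_, ?_⟩
  · show vol L = rhat
    rw [hLeqU]
  · intro r hr hrle
    set Lr : Finset ι := Finset.univ.filter (fun h => p h ≤ Δ h r) with hLr
    have hLrSC : Lr ∈ SC := by
      rw [memSC]
      intro g hg
      rw [hLr, Finset.mem_filter] at hg
      exact hg.2.trans (hΔ g hr (volnn Lr) hrle)
    exact hrle.trans (volmono (subU Lr hLrSC))
  · intro h
    constructor
    · intro hh
      rw [← hL, hLeqU] at hh
      exact ⟨U, (memSC U).1 hUSC, hh⟩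
    · rintro ⟨A, hA, hhA⟩
      have : A ∈ SC := (memSC A).2 hA
      have := subU A this hhA
      rw [← hLeqU] at this
      exact this
end

section
/- Let H be a finite set, Δ(h,r) = α π(h) β(r) a factorized threshold collection with β nondecreasing, and let R(p) be the step-up procedure: R(p) = L_Δ(r̂(p)) where r̂(p) = max{ r ≥ 0 : |L_Δ(r)(p)| ≥ r } and L_Δ(r)(p) = {h : p_h ≤ Δ(h,r)}. Then |R(p)| is a nonincreasing function of p: if p ≤ q coordinatewise (p_h ≤ q_h for all h), then |R(q)| ≤ |R(p)|; in fact R(q) ⊆ R(p). -/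
open Finset

/-- The step-up procedure associated to a factorized threshold collection
`Δ(h,r) = α π(h) β(r)` is coordinatewise nonincreasing in the `p`-values:
if `p ≤ q` then `R(q) ⊆ R(p)`, and in particular `|R(q)| ≤ |R(p)|`. -/
theorem step_up_volume_nonincreasing_in_p_values
    {ι : Type*} [Fintype ι] [DecidableEq ι]
    (Λ : ι → ℝ) (hΛ : ∀ h, 0 < Λ h)
    (α : ℝ) (hα : 0 < α) (π : ι → ℝ) (hπ : ∀ h, π h ∈ Set.Icc (0:ℝ) 1)
    (β : ℝ → ℝ) (hβmono : Monotone β)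
    (p q : ι → ℝ) (hp : ∀ h, p h ∈ Set.Icc (0:ℝ) 1)
    (hq : ∀ h, q h ∈ Set.Icc (0:ℝ) 1) (hpq : ∀ h, p h ≤ q h)
    (rp rq : ℝ)
    -- rp is the maximum of {r ≥ 0 : |L_Δ(r)(p)| ≥ r}
    (hrp0 : 0 ≤ rp)
    (hrpmem : rp ≤ ∑ h ∈ Finset.univ.filter (fun h => p h ≤ α * π h * β rp), Λ h)
    (hrpmax : ∀ r : ℝ, 0 ≤ r →
      r ≤ ∑ h ∈ Finset.univ.filter (fun h => p h ≤ α * π h * β r), Λ h → r ≤ rp)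
    -- rq is the maximum of {r ≥ 0 : |L_Δ(r)(q)| ≥ r}
    (hrq0 : 0 ≤ rq)
    (hrqmem : rq ≤ ∑ h ∈ Finset.univ.filter (fun h => q h ≤ α * π h * β rq), Λ h)
    (hrqmax : ∀ r : ℝ, 0 ≤ r →
      r ≤ ∑ h ∈ Finset.univ.filter (fun h => q h ≤ α * π h * β r), Λ h → r ≤ rq) :
    (Finset.univ.filter (fun h => q h ≤ α * π h * β rq))
      ⊆ (Finset.univ.filter (fun h => p h ≤ α * π h * β rp)) ∧
    (∑ h ∈ Finset.univ.filter (fun h => q h ≤ α * π h * β rq), Λ h)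
      ≤ ∑ h ∈ Finset.univ.filter (fun h => p h ≤ α * π h * β rp), Λ h := by
  have hrqrp : rq ≤ rp := by
    apply hrpmax rq hrq0
    refine le_trans hrqmem (Finset.sum_le_sum_of_subset_of_nonneg ?_ ?_)
    · intro h hh
      simp only [mem_filter, mem_univ, true_and] at hh ⊢
      exact le_trans (hpq h) hh
    · intro h _ _; exact (hΛ h).le
  have hsub : (Finset.univ.filter (fun h => q h ≤ α * π h * β rq))
      ⊆ (Finset.univ.filter (fun h => p h ≤ α * π h * β rp)) := by
    intro h hh
    simp only [mem_filter, mem_univ, true_and] at hh ⊢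
    calc p h ≤ q h := hpq h
    _ ≤ α * π h * β rq := hh
    _ ≤ α * π h * β rp := by
        apply mul_le_mul_of_nonneg_left (hβmono hrqrp)
        exact mul_nonneg hα.le (hπ h).1
  exact ⟨hsub, Finset.sum_le_sum_of_subset_of_nonneg hsub (fun h _ _ => (hΛ h).le)⟩
end

section
/- Let p = (p_h)_{h∈H} be a [0,1]^H-valued random vector, H finite. Say p is PRDS on h if for every measurable nondecreasing set D ⊆ [0,1]^H, u ↦ P(p ∈ D | p_h = u) is nondecreasing. If p is PRDS on h and P(p_h ≤ t) ≤ t for all t ∈ [0,1], and R : [0,1]^H → subsets of H is such that |R(p)| is nonincreasing in each coordinate, then for every c > 0, E[ 1_{p_h ≤ c|R(p)|} / |R(p)| ] ≤ c. -/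
open MeasureTheory ProbabilityTheory ENNReal Set Finset

/-!
Write `S = |R(p)|` and `G(s) = P(S ≤ s ∣ p_h ≤ c s)`. Since `S` is nonincreasing in `p`, the
set `{S ≤ s}` is nondecreasing, so PRDS makes `u ↦ P(S ≤ s ∣ p_h ≤ u)` nondecreasing. Hence for
`a < v`, with `Q = P(· ∣ p_h ≤ c v)`,
`P(p_h ≤ c v, S = v) ≤ P(p_h ≤ c v) (Q(S ≤ v) - Q(S ≤ a)) ≤ c v (G v - G a)`,
the last step by super-uniformity of `p_h`. Dividing by `v` and summing over the finitely many
positive values of `S`, the right-hand sides telescope to at most `c`.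
-/

theorem Finset.sum_le_sub_of_forall_le_sub {α β : Type*} [LinearOrder α] [AddCommGroup β]
    [PartialOrder β] [IsOrderedAddMonoid β] {f g : α → β} {B : β} (hg : ∀ x, g x ≤ B)
    (V : Finset α) (hf : ∀ v ∈ V, ∀ a < v, f v ≤ g v - g a) {a₀ : α} (hV : ∀ v ∈ V, a₀ < v) :
    ∑ v ∈ V, f v ≤ B - g a₀ := by
  classical
  induction V using Finset.induction_on_min generalizing a₀ with
  | empty => simpa using hg a₀
  | insert m s hm ih =>
    rw [sum_insert fun hms => lt_irrefl m (hm m hms)]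
    calc f m + ∑ v ∈ s, f v
        ≤ (g m - g a₀) + (B - g m) :=
          add_le_add (hf m (mem_insert_self m s) a₀ (hV m (mem_insert_self m s)))
            (ih (fun v hv => hf v (mem_insert_of_mem hv)) hm)
      _ = B - g a₀ := by abel

theorem Finset.measurable_sum_mem {α ι : Type*} [MeasurableSpace α] [Fintype ι]
    {R : α → Finset ι} (hR : ∀ g, MeasurableSet {x | g ∈ R x}) (Λ : ι → ℝ) :
    Measurable fun x => ∑ g ∈ R x, Λ g := by
  classical
  have hsum : ∀ x, ∑ g ∈ R x, Λ g = ∑ g, if g ∈ R x then Λ g else 0 :=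
    fun x => by rw [sum_ite_mem, univ_inter]
  simp_rw [hsum]
  exact Finset.measurable_sum _ fun g _ => Measurable.ite (hR g) measurable_const measurable_const

section

variable {Ω : Type*} [MeasurableSpace Ω] {P : Measure Ω} {X S : Ω → ℝ}

theorem setLIntegral_comp_eq_sum (hS : Measurable S) {A : Set Ω} (hA : MeasurableSet A)
    (V : Finset ℝ) (hAV : ∀ ω ∈ A, S ω ∈ V) (f : ℝ → ℝ≥0∞) :
    ∫⁻ ω in A, f (S ω) ∂P = ∑ v ∈ V, f v * P (A ∩ S ⁻¹' {v}) := by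
  have hfiber : ∀ v ∈ V, MeasurableSet (A ∩ S ⁻¹' {v}) :=
    fun v _ => hA.inter (hS (measurableSet_singleton v))
  calc ∫⁻ ω in A, f (S ω) ∂P = ∫⁻ ω in ⋃ v ∈ V, A ∩ S ⁻¹' {v}, f (S ω) ∂P := by
        congr
        ext ω
        simp only [mem_iUnion, mem_inter_iff, Set.mem_preimage, exists_prop]
        exact ⟨fun hω => ⟨S ω, hAV ω hω, hω, rfl⟩, fun ⟨_, _, hω, _⟩ => hω⟩
    _ = ∑ v ∈ V, ∫⁻ ω in A ∩ S ⁻¹' {v}, f (S ω) ∂P :=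
        lintegral_biUnion_finset
          ((pairwiseDisjoint_fiber S _).mono fun _ => inter_subset_right) hfiber _
    _ = ∑ v ∈ V, f v * P (A ∩ S ⁻¹' {v}) := by
        refine sum_congr rfl fun v hv => ?_
        rw [setLIntegral_congr_fun (hfiber v hv) fun ω hω => congrArg f hω.2, setLIntegral_const]

theorem measureReal_le_self_of_superUniform [IsProbabilityMeasure P]
    (hX : ∀ t : ℝ, 0 ≤ t → t ≤ 1 → P {ω | X ω ≤ t} ≤ ENNReal.ofReal t) {t : ℝ} (ht : 0 ≤ t) :
    P.real {ω | X ω ≤ t} ≤ t := by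
  rcases le_total t 1 with ht1 | ht1
  · exact toReal_le_of_le_ofReal ht (hX t ht ht1)
  · exact measureReal_le_one.trans ht1

theorem cond_eq_measure_inter_div {U : Set Ω} (hU : MeasurableSet U) (A : Set Ω) :
    P[A | U] = P (A ∩ U) / P U := by
  rw [cond_apply hU, inter_comm, ENNReal.div_eq_inv_mul]

variable (P X S) in
noncomputable def linearCondCDF (c s : ℝ) : ℝ :=
  P[|X ⁻¹' Iic (c * s)].real (S ⁻¹' Iic s)

theorem inv_mul_measureReal_le_linearCondCDF_sub [IsProbabilityMeasure P]
    (hX : Measurable X) (hS : Measurable S)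
    (hU : ∀ t : ℝ, 0 ≤ t → t ≤ 1 → P {ω | X ω ≤ t} ≤ ENNReal.ofReal t)
    (hcond : ∀ s, Monotone fun u => P[S ⁻¹' Iic s | X ⁻¹' Iic u])
    {c a v : ℝ} (hc : 0 ≤ c) (hav : a < v) (hv : 0 < v) :
    v⁻¹ * P.real (X ⁻¹' Iic (c * v) ∩ S ⁻¹' {v})
      ≤ c * (linearCondCDF P X S c v - linearCondCDF P X S c a) := by
  set B := X ⁻¹' Iic (c * v)
  have hB : MeasurableSet B := hX measurableSet_Iic
  have hSa : MeasurableSet (S ⁻¹' Iic a) := hS measurableSet_Iic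
  have hSav : S ⁻¹' Iic a ⊆ S ⁻¹' Iic v := preimage_mono (Iic_subset_Iic.mpr hav.le)
  have hGa : linearCondCDF P X S c a ≤ P[|B].real (S ⁻¹' Iic a) :=
    toReal_mono (measure_ne_top _ _) (hcond a (mul_le_mul_of_nonneg_left hav.le hc))
  have hGv : P[|B].real (S ⁻¹' Iic a) ≤ linearCondCDF P X S c v := measureReal_mono hSav
  have hfiber : P.real (B ∩ S ⁻¹' {v})
      ≤ P.real B * (linearCondCDF P X S c v - P[|B].real (S ⁻¹' Iic a)) := by
    calc P.real (B ∩ S ⁻¹' {v}) ≤ P.real (B ∩ (S ⁻¹' Iic v \ S ⁻¹' Iic a)) :=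
          measureReal_mono (inter_subset_inter_right _ fun ω (hω : S ω = v) =>
            ⟨hω.le, fun (h : S ω ≤ a) => (hω ▸ hav).not_ge h⟩)
      _ = P.real B * P[|B].real (S ⁻¹' Iic v \ S ⁻¹' Iic a) := by
          simp only [Measure.real, ← cond_mul_eq_inter hB, toReal_mul, mul_comm]
      _ = _ := by rw [measureReal_sdiff hSav hSa]; rfl
  have hPB : P.real B ≤ c * v := measureReal_le_self_of_superUniform hU (by positivity)
  calc v⁻¹ * P.real (B ∩ S ⁻¹' {v})
      ≤ v⁻¹ * (c * v * (linearCondCDF P X S c v - linearCondCDF P X S c a)) := by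
        gcongr
        exact hfiber.trans (mul_le_mul hPB (by linarith) (by linarith) (by positivity))
    _ = c * (linearCondCDF P X S c v - linearCondCDF P X S c a) := by field_simp

theorem setLIntegral_inv_le_of_cond_mono [IsProbabilityMeasure P]
    (hX : Measurable X) (hS : Measurable S) (hSfin : (range S).Finite)
    (hU : ∀ t : ℝ, 0 ≤ t → t ≤ 1 → P {ω | X ω ≤ t} ≤ ENNReal.ofReal t)
    (hcond : ∀ s, Monotone fun u => P[S ⁻¹' Iic s | X ⁻¹' Iic u])
    {c : ℝ} (hc : 0 ≤ c) :
    ∫⁻ ω in {ω | X ω ≤ c * S ω ∧ 0 < S ω}, ENNReal.ofReal (S ω)⁻¹ ∂P ≤ ENNReal.ofReal c := by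
  set V := hSfin.toFinset.filter (0 < ·)
  set A := {ω | X ω ≤ c * S ω ∧ 0 < S ω}
  have hVpos : ∀ v ∈ V, 0 < v := fun v hv => (mem_filter.mp hv).2
  have hA : MeasurableSet A :=
    (measurableSet_le hX (hS.const_mul c)).inter (measurableSet_lt measurable_const hS)
  have hAV : ∀ ω ∈ A, S ω ∈ V :=
    fun ω hω => mem_filter.mpr ⟨hSfin.mem_toFinset.mpr (mem_range_self ω), hω.2⟩
  have hfiber : ∀ v ∈ V, A ∩ S ⁻¹' {v} = X ⁻¹' Iic (c * v) ∩ S ⁻¹' {v} := by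
    intro v hv
    ext ω
    simp only [A, mem_inter_iff, Set.mem_preimage, Set.mem_Iic]
    constructor
    · rintro ⟨⟨hX, -⟩, rfl⟩
      exact ⟨hX, rfl⟩
    · rintro ⟨hX, rfl⟩
      exact ⟨⟨hX, hVpos _ hv⟩, rfl⟩
  have hsum : ∑ v ∈ V, v⁻¹ * P.real (X ⁻¹' Iic (c * v) ∩ S ⁻¹' {v})
      ≤ c - c * linearCondCDF P X S c 0 :=
    sum_le_sub_of_forall_le_sub (g := fun s => c * linearCondCDF P X S c s)
      (fun _ => mul_le_of_le_one_right hc measureReal_le_one) V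
      (fun v hv a hav => (inv_mul_measureReal_le_linearCondCDF_sub hX hS hU hcond hc hav
        (hVpos v hv)).trans_eq (mul_sub _ _ _))
      hVpos
  calc ∫⁻ ω in A, ENNReal.ofReal (S ω)⁻¹ ∂P
      = ∑ v ∈ V, ENNReal.ofReal v⁻¹ * P (X ⁻¹' Iic (c * v) ∩ S ⁻¹' {v}) := by
        rw [setLIntegral_comp_eq_sum hS hA V hAV fun s => ENNReal.ofReal s⁻¹]
        exact sum_congr rfl fun v hv => by rw [hfiber v hv]
    _ = ENNReal.ofReal (∑ v ∈ V, v⁻¹ * P.real (X ⁻¹' Iic (c * v) ∩ S ⁻¹' {v})) := by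
        rw [ofReal_sum_of_nonneg fun v hv =>
          mul_nonneg (inv_nonneg.mpr (hVpos v hv).le) measureReal_nonneg]
        refine sum_congr rfl fun v hv => ?_
        rw [ofReal_mul (inv_nonneg.mpr (hVpos v hv).le), Measure.real,
          ofReal_toReal (measure_ne_top _ _)]
    _ ≤ ENNReal.ofReal c :=
        ofReal_le_ofReal (hsum.trans (sub_le_self _ (mul_nonneg hc measureReal_nonneg)))

end

theorem dependency_control_PRDS_case_general
    {Ω : Type*} [MeasurableSpace Ω] (P : Measure Ω) [IsProbabilityMeasure P]
    {ι : Type*} [Fintype ι]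
    (Λ : ι → ℝ)
    (p : ι → Ω → ℝ) (hp : ∀ g, Measurable (p g))
    (h : ι)
    (hUnif : ∀ t : ℝ, 0 ≤ t → t ≤ 1 → P {ω | p h ω ≤ t} ≤ ENNReal.ofReal t)
    -- PRDS on h, in the conditioning form
    (hPRDS : ∀ D : Set (ι → ℝ), MeasurableSet D →
      (∀ z z' : ι → ℝ, z ∈ D → (∀ i, z i ≤ z' i) → z' ∈ D) →
      ∀ u u' : ℝ, u ≤ u' → 0 < P {ω | p h ω ≤ u} →
        P {ω | (fun i => p i ω) ∈ D ∧ p h ω ≤ u} / P {ω | p h ω ≤ u}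
          ≤ P {ω | (fun i => p i ω) ∈ D ∧ p h ω ≤ u'} / P {ω | p h ω ≤ u'})
    (R : (ι → ℝ) → Finset ι)
    (hRmeas : ∀ g, MeasurableSet {x : ι → ℝ | g ∈ R x})
    (hRmono : ∀ x y : ι → ℝ, (∀ i, x i ≤ y i) →
      (∑ g ∈ R y, Λ g) ≤ ∑ g ∈ R x, Λ g)
    (c : ℝ) (hc : 0 < c) :
    ∫⁻ ω in {ω | p h ω ≤ c * (∑ g ∈ R (fun i => p i ω), Λ g)
        ∧ 0 < ∑ g ∈ R (fun i => p i ω), Λ g},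
      ENNReal.ofReal (∑ g ∈ R (fun i => p i ω), Λ g)⁻¹ ∂P
      ≤ ENNReal.ofReal c := by
  have hSx : Measurable fun x : ι → ℝ => ∑ g ∈ R x, Λ g := measurable_sum_mem hRmeas Λ
  have hS : Measurable fun ω => ∑ g ∈ R (fun i => p i ω), Λ g :=
    hSx.comp (measurable_pi_lambda _ hp)
  have hSfin : (range fun ω => ∑ g ∈ R (fun i => p i ω), Λ g).Finite :=
    (finite_range fun T : Finset ι => ∑ g ∈ T, Λ g).subset
      (by rintro _ ⟨ω, rfl⟩; exact mem_range_self _)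
  refine setLIntegral_inv_le_of_cond_mono (hp h) hS hSfin hUnif (fun s u u' hu => ?_) hc.le
  beta_reduce
  have hXu : MeasurableSet (p h ⁻¹' Iic u) := hp h measurableSet_Iic
  rcases eq_or_ne (P (p h ⁻¹' Iic u)) 0 with h0 | h0
  · simp [cond_eq_zero_of_meas_eq_zero h0]
  rw [cond_eq_measure_inter_div hXu, cond_eq_measure_inter_div (hp h measurableSet_Iic)]
  exact hPRDS {x | ∑ g ∈ R x, Λ g ≤ s} (hSx measurableSet_Iic)
    (fun z z' hz hzz' => (hRmono z z' hzz').trans hz) u u' hu (pos_iff_ne_zero.mpr h0)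

/-- Proposition 3.5: under the PRDS condition on `h` (in the conditioning-on-
`{p_h ≤ u}` form), if `|R(p)|` is nonincreasing in each coordinate, then the
pair `(p_h, |R|)` satisfies the dependency control condition with the linear
shape function. -/
theorem dependency_control_PRDS_case
    {Ω : Type*} [MeasurableSpace Ω] (P : Measure Ω) [IsProbabilityMeasure P]
    {ι : Type*} [Fintype ι] [DecidableEq ι]
    (Λ : ι → ℝ) (hΛ : ∀ g, 0 < Λ g)
    (p : ι → Ω → ℝ) (hp : ∀ g, Measurable (p g))
    (hprange : ∀ g ω, p g ω ∈ Set.Icc (0:ℝ) 1)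
    (h : ι)
    (hUnif : ∀ t : ℝ, 0 ≤ t → t ≤ 1 → P {ω | p h ω ≤ t} ≤ ENNReal.ofReal t)
    -- PRDS on h, in the conditioning form
    (hPRDS : ∀ D : Set (ι → ℝ), MeasurableSet D →
      (∀ z z' : ι → ℝ, z ∈ D → (∀ i, z i ≤ z' i) → z' ∈ D) →
      ∀ u u' : ℝ, u ≤ u' → 0 < P {ω | p h ω ≤ u} →
        P {ω | (fun i => p i ω) ∈ D ∧ p h ω ≤ u} / P {ω | p h ω ≤ u}
          ≤ P {ω | (fun i => p i ω) ∈ D ∧ p h ω ≤ u'} / P {ω | p h ω ≤ u'})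
    (R : (ι → ℝ) → Finset ι)
    (hRmeas : ∀ g, MeasurableSet {x : ι → ℝ | g ∈ R x})
    (hRmono : ∀ x y : ι → ℝ, (∀ i, x i ≤ y i) →
      (∑ g ∈ R y, Λ g) ≤ ∑ g ∈ R x, Λ g)
    (c : ℝ) (hc : 0 < c) :
    ∫⁻ ω in {ω | p h ω ≤ c * (∑ g ∈ R (fun i => p i ω), Λ g)
        ∧ 0 < ∑ g ∈ R (fun i => p i ω), Λ g},
      ENNReal.ofReal (∑ g ∈ R (fun i => p i ω), Λ g)⁻¹ ∂P
      ≤ ENNReal.ofReal c :=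
  dependency_control_PRDS_case_general P Λ p hp h hUnif hPRDS R hRmeas hRmono c hc
end

section
/- Suppose p is PRDS on h in the conditioning sense that for every measurable nondecreasing D ⊆ [0,1]^H the function u ↦ P(p ∈ D | p_h = u) is nondecreasing. Then for all 0 < u ≤ u' with P(p_h ≤ u) > 0 and any measurable nondecreasing D, P(p ∈ D | p_h ≤ u') ≥ P(p ∈ D | p_h ≤ u). Consequently, for any procedure R with |R| nonincreasing in the p-values, for every r ≥ 0 the function u ↦ P(|R(p)| < r | p_h ≤ u) is nondecreasing. -/
/-!
Disintegrating along `p_h`, `P(p ∈ D, p_h ≤ u) = ∫_{t ≤ u} φ(t) dP_{p_h}(t)` with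
`φ(t) = P(p ∈ D | p_h = t)` nondecreasing, so `P(p ∈ D | p_h ≤ u)` is an average of `φ` over
`(-∞, u]`. Enlarging the window to `(-∞, u']` only adds values of `φ` that are at least
`φ(u)`, which dominates the old average, so the average cannot decrease. The set
`{z : ∑_{g ∈ R z} Λ g < r}` is measurable and nondecreasing, which gives the second claim.
-/

open MeasureTheory ProbabilityTheory ENNReal Set Finset

theorem ENNReal.div_le_add_div_add {A B m n c : ℝ≥0∞} (hmt : m ≠ ∞) (hnt : n ≠ ∞)
    (hA : A ≤ c * m) (hB : c * n ≤ B) : A / m ≤ (A + B) / (m + n) := by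
  rcases eq_or_ne m 0 with rfl | hm0
  · simp_all
  have hmn0 : m + n ≠ 0 := by simp [hm0]
  have hmnt : m + n ≠ ∞ := ENNReal.add_ne_top.2 ⟨hmt, hnt⟩
  rw [ENNReal.div_le_iff hm0 hmt, mul_comm, ← mul_div_assoc,
    ENNReal.le_div_iff_mul_le (Or.inl hmn0) (Or.inl hmnt)]
  have hAn : A * n ≤ B * m :=
    calc A * n ≤ c * m * n := by gcongr
      _ = c * n * m := by ring
      _ ≤ B * m := by gcongr
  calc A * (m + n) = A * m + A * n := by ring
    _ ≤ A * m + B * m := by gcongr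
    _ = m * (A + B) := by ring

theorem monotone_setLIntegral_Iic_div_measure_Iic {μ : Measure ℝ} [IsFiniteMeasure μ]
    {f : ℝ → ℝ≥0∞} (hf : Monotone f) :
    Monotone fun u => (∫⁻ t in Iic u, f t ∂μ) / μ (Iic u) := by
  intro u u' huu'
  have hsplit : Iic u' = Iic u ∪ Ioc u u' := (Iic_union_Ioc_eq_Iic huu').symm
  have hdisj : Disjoint (Iic u) (Ioc u u') := Iic_disjoint_Ioc le_rfl
  simp only [hsplit, lintegral_union measurableSet_Ioc hdisj,
    measure_union hdisj measurableSet_Ioc]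
  refine ENNReal.div_le_add_div_add (measure_ne_top μ _) (measure_ne_top μ _) (c := f u) ?_ ?_
  · rw [← setLIntegral_const]
    exact setLIntegral_mono measurable_const fun t ht => hf ht
  · rw [← setLIntegral_const]
    exact setLIntegral_mono' measurableSet_Ioc fun t ht => hf ht.1.le

theorem monotone_measure_inter_div_of_monotone_condDistrib {Ω β : Type*} [MeasurableSpace Ω]
    [MeasurableSpace β] [StandardBorelSpace β] [Nonempty β] {P : Measure Ω} [IsFiniteMeasure P]
    {X : Ω → ℝ} {Y : Ω → β} (hX : Measurable X) (hY : AEMeasurable Y P) {D : Set β}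
    (hD : MeasurableSet D) (hmono : Monotone fun u => condDistrib Y X P u D) :
    Monotone fun u => P {ω | Y ω ∈ D ∧ X ω ≤ u} / P {ω | X ω ≤ u} := by
  have hjoint (u : ℝ) :
      P {ω | Y ω ∈ D ∧ X ω ≤ u} = ∫⁻ t in Iic u, condDistrib Y X P t D ∂P.map X := by
    rw [setLIntegral_map measurableSet_Iic (Kernel.measurable_coe _ hD) hX,
      setLIntegral_preimage_condDistrib hX hY hD measurableSet_Iic, inter_comm]
    rfl
  have hmarginal (u : ℝ) : P {ω | X ω ≤ u} = P.map X (Iic u) :=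
    (Measure.map_apply hX measurableSet_Iic).symm
  simp only [hjoint, hmarginal]
  exact monotone_setLIntegral_Iic_div_measure_Iic hmono

theorem measurable_sum_finset_of_measurableSet_mem {α ι M : Type*} [MeasurableSpace α]
    [Fintype ι] [AddCommMonoid M] [MeasurableSpace M] [MeasurableAdd₂ M]
    {R : α → Finset ι} (hR : ∀ g, MeasurableSet {x | g ∈ R x}) (Λ : ι → M) :
    Measurable fun x => ∑ g ∈ R x, Λ g := by
  classical
  have hsum : (fun x => ∑ g ∈ R x, Λ g) =
      fun x => ∑ g, {x | g ∈ R x}.indicator (fun _ => Λ g) x := by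
    funext x
    rw [Finset.sum_indicator_eq_sum_filter]
    congr 1
    ext g
    simp
  rw [hsum]
  exact Finset.measurable_sum _ fun g _ => measurable_const.indicator (hR g)

theorem PRDS_pointwise_implies_conditioning_form_general
    {Ω : Type*} [MeasurableSpace Ω] (P : Measure Ω) [IsProbabilityMeasure P]
    {ι : Type*} [Fintype ι]
    (Λ : ι → ℝ)
    (p : ι → Ω → ℝ) (hp : ∀ g, Measurable (p g))
    (h : ι)
    -- PRDS on h in the pointwise-conditioning sense, via the regular
    -- conditional distribution of the p-value vector given p_h
    (hPRDS : ∀ D : Set (ι → ℝ), MeasurableSet D →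
      (∀ z z' : ι → ℝ, z ∈ D → (∀ i, z i ≤ z' i) → z' ∈ D) →
      Monotone (fun u : ℝ =>
        (condDistrib (fun ω i => p i ω) (p h) P) u D))
    (R : (ι → ℝ) → Finset ι)
    (hRmeas : ∀ g, MeasurableSet {x : ι → ℝ | g ∈ R x})
    (hRmono : ∀ x y : ι → ℝ, (∀ i, x i ≤ y i) →
      (∑ g ∈ R y, Λ g) ≤ ∑ g ∈ R x, Λ g) :
    -- the conditioning-on-{p_h ≤ u} form of PRDS holds
    (∀ D : Set (ι → ℝ), MeasurableSet D →
      (∀ z z' : ι → ℝ, z ∈ D → (∀ i, z i ≤ z' i) → z' ∈ D) →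
      ∀ u u' : ℝ, 0 < u → u ≤ u' → 0 < P {ω | p h ω ≤ u} →
        P {ω | (fun i => p i ω) ∈ D ∧ p h ω ≤ u} / P {ω | p h ω ≤ u}
          ≤ P {ω | (fun i => p i ω) ∈ D ∧ p h ω ≤ u'} / P {ω | p h ω ≤ u'}) ∧
    -- consequently, u ↦ P(|R(p)| < r | p_h ≤ u) is nondecreasing
    (∀ r : ℝ, ∀ u u' : ℝ, 0 < u → u ≤ u' → 0 < P {ω | p h ω ≤ u} →
      P {ω | (∑ g ∈ R (fun i => p i ω), Λ g) < r ∧ p h ω ≤ u}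
          / P {ω | p h ω ≤ u}
        ≤ P {ω | (∑ g ∈ R (fun i => p i ω), Λ g) < r ∧ p h ω ≤ u'}
          / P {ω | p h ω ≤ u'}) := by
  have hY : Measurable fun ω i => p i ω := measurable_pi_lambda _ hp
  have hcond (D : Set (ι → ℝ)) (hD : MeasurableSet D)
      (hDup : ∀ z z' : ι → ℝ, z ∈ D → (∀ i, z i ≤ z' i) → z' ∈ D) :
      Monotone fun u => P {ω | (fun i => p i ω) ∈ D ∧ p h ω ≤ u} / P {ω | p h ω ≤ u} :=
    monotone_measure_inter_div_of_monotone_condDistrib (hp h) hY.aemeasurable hD (hPRDS D hD hDup)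
  refine ⟨fun D hD hDup u u' _ huu' _ => hcond D hD hDup huu', fun r u u' _ huu' _ => ?_⟩
  have hDmeas : MeasurableSet {x : ι → ℝ | ∑ g ∈ R x, Λ g < r} :=
    measurable_sum_finset_of_measurableSet_mem hRmeas Λ measurableSet_Iio
  exact hcond _ hDmeas (fun z z' hz hle => (hRmono z z' hle).trans_lt hz) huu'

/-- If `p` is PRDS on `h` in the sense that, for every measurable nondecreasing
set `D`, `u ↦ P(p ∈ D | p_h = u)` (given by the regular conditional
distribution) is nondecreasing, then `u ↦ P(p ∈ D | p_h ≤ u)` is nondecreasing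
as well; consequently, for a procedure `R` with `|R|` coordinatewise
nonincreasing, `u ↦ P(|R(p)| < r | p_h ≤ u)` is nondecreasing for every `r`. -/
theorem PRDS_pointwise_implies_conditioning_form
    {Ω : Type*} [MeasurableSpace Ω] (P : Measure Ω) [IsProbabilityMeasure P]
    {ι : Type*} [Fintype ι] [DecidableEq ι] [Nonempty ι]
    (Λ : ι → ℝ) (hΛ : ∀ g, 0 < Λ g)
    (p : ι → Ω → ℝ) (hp : ∀ g, Measurable (p g))
    (hprange : ∀ g ω, p g ω ∈ Set.Icc (0:ℝ) 1)
    (h : ι)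
    -- PRDS on h in the pointwise-conditioning sense, via the regular
    -- conditional distribution of the p-value vector given p_h
    (hPRDS : ∀ D : Set (ι → ℝ), MeasurableSet D →
      (∀ z z' : ι → ℝ, z ∈ D → (∀ i, z i ≤ z' i) → z' ∈ D) →
      Monotone (fun u : ℝ =>
        (condDistrib (fun ω i => p i ω) (p h) P) u D))
    (R : (ι → ℝ) → Finset ι)
    (hRmeas : ∀ g, MeasurableSet {x : ι → ℝ | g ∈ R x})
    (hRmono : ∀ x y : ι → ℝ, (∀ i, x i ≤ y i) →
      (∑ g ∈ R y, Λ g) ≤ ∑ g ∈ R x, Λ g) :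
    -- the conditioning-on-{p_h ≤ u} form of PRDS holds
    (∀ D : Set (ι → ℝ), MeasurableSet D →
      (∀ z z' : ι → ℝ, z ∈ D → (∀ i, z i ≤ z' i) → z' ∈ D) →
      ∀ u u' : ℝ, 0 < u → u ≤ u' → 0 < P {ω | p h ω ≤ u} →
        P {ω | (fun i => p i ω) ∈ D ∧ p h ω ≤ u} / P {ω | p h ω ≤ u}
          ≤ P {ω | (fun i => p i ω) ∈ D ∧ p h ω ≤ u'} / P {ω | p h ω ≤ u'}) ∧
    -- consequently, u ↦ P(|R(p)| < r | p_h ≤ u) is nondecreasing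
    (∀ r : ℝ, ∀ u u' : ℝ, 0 < u → u ≤ u' → 0 < P {ω | p h ω ≤ u} →
      P {ω | (∑ g ∈ R (fun i => p i ω), Λ g) < r ∧ p h ω ≤ u}
          / P {ω | p h ω ≤ u}
        ≤ P {ω | (∑ g ∈ R (fun i => p i ω), Λ g) < r ∧ p h ω ≤ u'}
          / P {ω | p h ω ≤ u'}) :=
  PRDS_pointwise_implies_conditioning_form_general P Λ p hp h hPRDS R hRmeas hRmono
end

section
/- (FDR control of the weighted linear step-up under PRDS.) Let H be a finite set, Λ : H → ℝ>0, π : H → [0,1], α > 0. Suppose the p-values (p_h)_{h∈H} are PRDS on H₀ (in the conditioning-on-{p_h ≤ u} sense) and P(p_h ≤ t) ≤ t for all t and all h ∈ H₀. Let R be the step-up procedure associated to the threshold collection Δ(h,r) = α π(h) r, i.e., R = L_Δ(r̂) with r̂ = max{r ≥ 0 : |L_Δ(r)| ≥ r}. Then FDR(R) ≤ α · Σ_{h∈H₀} Λ(h) π(h). -/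
open MeasureTheory ENNReal Set Finset ProbabilityTheory

/-!
Self-consistency gives `r̂ = |R|`, so the false discovery proportion is
`∑_{h ∈ H₀} Λ(h) 1{p_h ≤ c r̂} / r̂` with `c = α π(h)`, and it suffices to bound
`E[1{p_h ≤ c r̂} / r̂] ≤ c` for each null `h`. The level `r̂` takes finitely many values (weights of
subsets of `H`), and each event `{v ≤ r̂}` is nonincreasing in the p-values, so by PRDS its
probability conditional on `A_v = {p_h ≤ c v}` decreases in `v`. Splitting by the value of `r̂` and
using `P(A_v) ≤ c v` gives `E[1{p_h ≤ c r̂} / r̂] ≤ c ∑_v P(r̂ = v | A_v)`, and the monotonicity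
makes this sum telescope to at most `c P(v₀ ≤ r̂ | A_{v₀}) ≤ c`.
-/

lemma apply_eq_of_forall_le_of_le_apply {α : Type*} [PartialOrder α] {f : α → α} (hf : Monotone f)
    {a x : α} (hx : x ≤ f x) (hmax : ∀ y, a ≤ y → y ≤ f y → y ≤ x) (ha : a ≤ f x) : f x = x :=
  le_antisymm (hmax (f x) ha (hf hx)) hx

lemma ite_pos_sum_inter_div_eq_sum {ι : Type*} [DecidableEq ι] {Λ : ι → ℝ} (hΛ : ∀ h, 0 ≤ Λ h)
    (R H₀ : Finset ι) :
    (if 0 < ∑ g ∈ R, Λ g then (∑ g ∈ R ∩ H₀, Λ g) / ∑ g ∈ R, Λ g else 0)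
      = ∑ h ∈ H₀, Λ h * (if h ∈ R then (∑ g ∈ R, Λ g)⁻¹ else 0) := by
  simp_rw [mul_ite, mul_zero]
  rw [sum_ite_mem, ← sum_mul, Finset.inter_comm H₀ R, ← div_eq_mul_inv]
  split_ifs with hR
  · rfl
  · rw [le_antisymm (not_lt.1 hR) (sum_nonneg fun g _ => hΛ g)]
    simp

section StepUp

variable {ι : Type*} [Fintype ι] (Λ π : ι → ℝ) (α : ℝ)

noncomputable def rejectionWeight (z : ι → ℝ) (r : ℝ) : ℝ :=
  ∑ h ∈ univ.filter (fun h => z h ≤ α * π h * r), Λ h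

/-- The event `{v ≤ r̂}` as a set of p-value vectors: some subset weight `≥ v` is
self-consistent. -/
def stepUpGE (v : ℝ) : Set (ι → ℝ) :=
  {z | ∃ T : Finset ι, v ≤ ∑ h ∈ T, Λ h ∧ ∑ h ∈ T, Λ h ≤ rejectionWeight Λ π α z (∑ h ∈ T, Λ h)}

variable {Λ π α}

lemma rejectionWeight_nonneg (hΛ : ∀ h, 0 ≤ Λ h) (z : ι → ℝ) (r : ℝ) :
    0 ≤ rejectionWeight Λ π α z r :=
  sum_nonneg fun h _ => hΛ h

lemma rejectionWeight_mono (hΛ : ∀ h, 0 ≤ Λ h) (hπ : ∀ h, 0 ≤ π h) (hα : 0 ≤ α) (z : ι → ℝ) :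
    Monotone (rejectionWeight Λ π α z) := fun _ _ hr =>
  sum_le_sum_of_subset_of_nonneg
    (monotone_filter_right _ fun h _ (hz : z h ≤ _) =>
      hz.trans (mul_le_mul_of_nonneg_left hr (mul_nonneg hα (hπ h))))
    fun h _ _ => hΛ h

lemma rejectionWeight_antitone_left (hΛ : ∀ h, 0 ≤ Λ h) {z z' : ι → ℝ} (hz : z ≤ z') (r : ℝ) :
    rejectionWeight Λ π α z' r ≤ rejectionWeight Λ π α z r :=
  sum_le_sum_of_subset_of_nonneg
    (monotone_filter_right _ fun h _ (hz' : z' h ≤ _) => (hz h).trans hz')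
    fun h _ _ => hΛ h

lemma measurable_rejectionWeight (r : ℝ) :
    Measurable fun z : ι → ℝ => rejectionWeight Λ π α z r := by
  simp_rw [rejectionWeight, sum_filter]
  exact Finset.measurable_sum _ fun h _ =>
    Measurable.ite (measurableSet_le (measurable_pi_apply h) measurable_const)
      measurable_const measurable_const

lemma measurableSet_stepUpGE (v : ℝ) : MeasurableSet (stepUpGE Λ π α v) := by
  have : stepUpGE Λ π α v = ⋃ T : Finset ι, {z | v ≤ ∑ h ∈ T, Λ h ∧
      ∑ h ∈ T, Λ h ≤ rejectionWeight Λ π α z (∑ h ∈ T, Λ h)} := by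
    ext z; simp [stepUpGE]
  rw [this]
  exact MeasurableSet.iUnion fun T =>
    (MeasurableSet.const _).inter (measurableSet_le measurable_const (measurable_rejectionWeight _))

lemma isLowerSet_stepUpGE (hΛ : ∀ h, 0 ≤ Λ h) (v : ℝ) : IsLowerSet (stepUpGE Λ π α v) :=
  fun _ _ hz ⟨T, hvT, hT⟩ => ⟨T, hvT, hT.trans (rejectionWeight_antitone_left hΛ hz _)⟩

lemma le_iff_mem_stepUpGE (hΛ : ∀ h, 0 ≤ Λ h) {z : ι → ℝ} {r : ℝ}
    (hself : rejectionWeight Λ π α z r = r)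
    (hmax : ∀ r', 0 ≤ r' → r' ≤ rejectionWeight Λ π α z r' → r' ≤ r) (v : ℝ) :
    v ≤ r ↔ z ∈ stepUpGE Λ π α v := by
  constructor
  · intro hv
    refine ⟨univ.filter fun h => z h ≤ α * π h * r, hv.trans_eq hself.symm, ?_⟩
    change rejectionWeight Λ π α z r ≤ rejectionWeight Λ π α z (rejectionWeight Λ π α z r)
    rw [hself, hself]
  · rintro ⟨T, hvT, hT⟩
    exact hvT.trans (hmax _ (sum_nonneg fun h _ => hΛ h) hT)

end StepUp

section Conditioning

variable {Ω : Type*} [MeasurableSpace Ω] {P : Measure Ω}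

lemma measure_le_ofReal_of_superuniform [IsProbabilityMeasure P] {U : Ω → ℝ}
    (hU : ∀ t : ℝ, 0 ≤ t → t ≤ 1 → P {ω | U ω ≤ t} ≤ ENNReal.ofReal t) {t : ℝ} (ht : 0 ≤ t) :
    P {ω | U ω ≤ t} ≤ ENNReal.ofReal t := by
  rcases le_or_gt t 1 with ht1 | ht1
  · exact hU t ht ht1
  · exact prob_le_one.trans (ENNReal.one_le_ofReal.2 ht1.le)

lemma div_measure_setOf_and_eq_cond {E : Type*} {X : Ω → E} {Y : Ω → ℝ} (hY : Measurable Y)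
    (D : Set E) (u : ℝ) :
    P {ω | X ω ∈ D ∧ Y ω ≤ u} / P {ω | Y ω ≤ u} = P[X ⁻¹' D | {ω | Y ω ≤ u}] := by
  rw [cond_apply (measurableSet_le hY measurable_const), ENNReal.div_eq_inv_mul]
  congr 2
  ext ω
  exact and_comm

lemma cond_preimage_le_of_isLowerSet [IsFiniteMeasure P] {ι : Type*} {X : Ω → ι → ℝ}
    (hX : Measurable X) {Y : Ω → ℝ} (hY : Measurable Y)
    (hprds : ∀ D : Set (ι → ℝ), MeasurableSet D → IsUpperSet D →
      ∀ u u' : ℝ, u ≤ u' → 0 < P {ω | Y ω ≤ u} →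
        P {ω | X ω ∈ D ∧ Y ω ≤ u} / P {ω | Y ω ≤ u}
          ≤ P {ω | X ω ∈ D ∧ Y ω ≤ u'} / P {ω | Y ω ≤ u'})
    {D : Set (ι → ℝ)} (hD : MeasurableSet D) (hDl : IsLowerSet D) {u u' : ℝ} (hu : u ≤ u')
    (hu0 : P {ω | Y ω ≤ u} ≠ 0) :
    P[X ⁻¹' D | {ω | Y ω ≤ u'}] ≤ P[X ⁻¹' D | {ω | Y ω ≤ u}] := by
  have hu0' : P {ω | Y ω ≤ u'} ≠ 0 :=
    (measure_mono_null fun ω (h : Y ω ≤ u) => h.trans hu).mt hu0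
  have hcompl := hprds Dᶜ hD.compl hDl.compl u u' hu (pos_iff_ne_zero.2 hu0)
  have hXD : MeasurableSet (X ⁻¹' D) := hX hD
  have := cond_isProbabilityMeasure (μ := P) hu0
  have := cond_isProbabilityMeasure (μ := P) hu0'
  rw [div_measure_setOf_and_eq_cond hY, div_measure_setOf_and_eq_cond hY, preimage_compl,
    prob_compl_eq_one_sub hXD, prob_compl_eq_one_sub hXD] at hcompl
  exact (ENNReal.sub_le_sub_iff_left prob_le_one one_ne_top).1 hcompl

end Conditioning

lemma ENNReal.mul_ofReal_inv_le {x : ℝ≥0∞} {c v : ℝ} (h : x ≤ ENNReal.ofReal (c * v)) :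
    x * ENNReal.ofReal v⁻¹ ≤ ENNReal.ofReal c := by
  rcases le_or_gt v 0 with hv | hv
  · simp [ENNReal.ofReal_of_nonpos (inv_nonpos.2 hv)]
  · calc x * ENNReal.ofReal v⁻¹ ≤ ENNReal.ofReal (c * v) * ENNReal.ofReal v⁻¹ := by gcongr
      _ = ENNReal.ofReal c := by
        rw [← ENNReal.ofReal_mul' (inv_nonneg.2 hv.le), mul_inv_cancel_right₀ hv.ne']

section Telescoping

variable {Ω : Type*} [MeasurableSpace Ω] {P : Measure Ω} [IsFiniteMeasure P]
  {r : Ω → ℝ} {A : ℝ → Set Ω} {c : ℝ}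

lemma measure_setOf_eq_inter_mul_ofReal_inv_le {v : ℝ} (hA : MeasurableSet (A v))
    (hAv : P (A v) ≤ ENNReal.ofReal (c * v)) :
    P ({ω | r ω = v} ∩ A v) * ENNReal.ofReal v⁻¹ ≤ ENNReal.ofReal c * P[{ω | r ω = v} | A v] := by
  rw [inter_comm, ← cond_mul_eq_inter hA, mul_assoc, mul_comm]
  exact mul_le_mul_left (ENNReal.mul_ofReal_inv_le hAv) _

lemma sum_insert_measure_inter_mul_ofReal_inv_le (hr : Measurable r)
    (hA : ∀ v, MeasurableSet (A v)) {T : Finset ℝ}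
    (hAT : ∀ v ∈ T, P (A v) ≤ ENNReal.ofReal (c * v))
    (hcond : ∀ v ∈ T, ∀ w ∈ T, v ≤ w → P[{ω | w ≤ r ω} | A w] ≤ P[{ω | w ≤ r ω} | A v])
    (S : Finset ℝ) (hST : S ⊆ T) {b : ℝ} (hbT : b ∈ T) (hbS : ∀ v ∈ S, b < v) :
    ∑ v ∈ insert b S, P ({ω | r ω = v} ∩ A v) * ENNReal.ofReal v⁻¹
      ≤ ENNReal.ofReal c * P[{ω | b ≤ r ω} | A b] := by
  induction S using Finset.induction_on_min generalizing b with
  | empty =>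
    rw [insert_empty, sum_singleton]
    refine (measure_setOf_eq_inter_mul_ofReal_inv_le (hA b) (hAT b hbT)).trans ?_
    gcongr
    exact Eq.ge
  | insert a S haS ih =>
    have haT : a ∈ T := hST (mem_insert_self a S)
    have hba : b < a := hbS a (mem_insert_self a S)
    have hb : b ∉ insert a S := fun h => (hbS b h).false
    have hdisj : Disjoint {ω | r ω = b} {ω | a ≤ r ω} := by
      refine Set.disjoint_left.2 fun ω (hωb : r ω = b) (hωa : a ≤ r ω) => ?_
      linarith
    calc ∑ v ∈ insert b (insert a S), P ({ω | r ω = v} ∩ A v) * ENNReal.ofReal v⁻¹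
        = P ({ω | r ω = b} ∩ A b) * ENNReal.ofReal b⁻¹
          + ∑ v ∈ insert a S, P ({ω | r ω = v} ∩ A v) * ENNReal.ofReal v⁻¹ := sum_insert hb
      _ ≤ ENNReal.ofReal c * P[{ω | r ω = b} | A b] + ENNReal.ofReal c * P[{ω | a ≤ r ω} | A a] :=
        add_le_add (measure_setOf_eq_inter_mul_ofReal_inv_le (hA b) (hAT b hbT))
          (ih ((Finset.subset_insert a S).trans hST) haT haS)
      _ ≤ ENNReal.ofReal c * P[{ω | r ω = b} | A b]
          + ENNReal.ofReal c * P[{ω | a ≤ r ω} | A b] := by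
        gcongr _ + _ * ?_
        exact hcond b hbT a haT hba.le
      _ = ENNReal.ofReal c * P[{ω | r ω = b} ∪ {ω | a ≤ r ω} | A b] := by
        rw [← mul_add, measure_union hdisj (measurableSet_le measurable_const hr)]
      _ ≤ ENNReal.ofReal c * P[{ω | b ≤ r ω} | A b] := by
        gcongr
        rintro ω (hω | hω)
        · exact (show r ω = b from hω).ge
        · exact hba.le.trans hω

lemma sum_measure_inter_mul_ofReal_inv_le (hr : Measurable r)
    (hA : ∀ v, MeasurableSet (A v)) (V : Finset ℝ)
    (hAV : ∀ v ∈ V, P (A v) ≤ ENNReal.ofReal (c * v))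
    (hcond : ∀ v ∈ V, ∀ w ∈ V, v ≤ w → P (A v) ≠ 0 →
      P[{ω | w ≤ r ω} | A w] ≤ P[{ω | w ≤ r ω} | A v]) :
    ∑ v ∈ V, P ({ω | r ω = v} ∩ A v) * ENNReal.ofReal v⁻¹ ≤ ENNReal.ofReal c := by
  set T := V.filter fun v => P (A v) ≠ 0
  have hsum : ∑ v ∈ T, P ({ω | r ω = v} ∩ A v) * ENNReal.ofReal v⁻¹
      = ∑ v ∈ V, P ({ω | r ω = v} ∩ A v) * ENNReal.ofReal v⁻¹ :=
    sum_filter_of_ne fun v _ hv hAv =>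
      hv (by rw [measure_mono_null inter_subset_right hAv, zero_mul])
  rw [← hsum]
  rcases T.eq_empty_or_nonempty with hT | hT
  · simp [hT]
  have hTV : T ⊆ V := filter_subset _ V
  have hbT : T.min' hT ∈ T := min'_mem T hT
  rw [← insert_erase hbT]
  calc _ ≤ ENNReal.ofReal c * P[{ω | T.min' hT ≤ r ω} | A (T.min' hT)] :=
        sum_insert_measure_inter_mul_ofReal_inv_le hr hA (fun v hv => hAV v (hTV hv))
          (fun v hv w hw hvw => hcond v (hTV hv) w (hTV hw) hvw (mem_filter.1 hv).2)
          _ (erase_subset _ T) hbT (fun v hv => min'_lt_of_mem_erase_min' T hT hv)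
    _ ≤ ENNReal.ofReal c := mul_le_of_le_one_right' prob_le_one

theorem lintegral_indicator_inv_le (hr : Measurable r)
    (hA : ∀ v, MeasurableSet (A v)) (V : Finset ℝ) (hrV : ∀ ω, r ω ∈ V)
    (hAV : ∀ v ∈ V, P (A v) ≤ ENNReal.ofReal (c * v))
    (hcond : ∀ v ∈ V, ∀ w ∈ V, v ≤ w → P (A v) ≠ 0 →
      P[{ω | w ≤ r ω} | A w] ≤ P[{ω | w ≤ r ω} | A v]) :
    ∫⁻ ω, ENNReal.ofReal ((A (r ω)).indicator (fun _ => (r ω)⁻¹) ω) ∂P ≤ ENNReal.ofReal c := by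
  have hB : ∀ v, MeasurableSet ({ω | r ω = v} ∩ A v) :=
    fun v => (measurableSet_eq_fun hr measurable_const).inter (hA v)
  have hsplit : ∀ ω, ENNReal.ofReal ((A (r ω)).indicator (fun _ => (r ω)⁻¹) ω)
      = ∑ v ∈ V, ({ω | r ω = v} ∩ A v).indicator (fun _ => ENNReal.ofReal v⁻¹) ω := by
    intro ω
    rw [sum_eq_single_of_mem (r ω) (hrV ω) fun v _ hv =>
      indicator_of_notMem (fun hω => hv hω.1.symm) _]
    by_cases hω : ω ∈ A (r ω) <;> simp [hω]
  simp_rw [hsplit]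
  rw [lintegral_finsetSum _ fun v _ => measurable_const.indicator (hB v)]
  simp_rw [lintegral_indicator_const (hB _), mul_comm (ENNReal.ofReal _)]
  exact sum_measure_inter_mul_ofReal_inv_le hr hA V hAV hcond

end Telescoping

section StepUpProcedure

variable {Ω : Type*} {ι : Type*} [Fintype ι] {Λ π : ι → ℝ} {α : ℝ} {X : Ω → ι → ℝ}
  {rhat : Ω → ℝ}

lemma setOf_le_eq_preimage_stepUpGE (hΛ : ∀ h, 0 ≤ Λ h)
    (hself : ∀ ω, rejectionWeight Λ π α (X ω) (rhat ω) = rhat ω)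
    (hmax : ∀ ω, ∀ r, 0 ≤ r → r ≤ rejectionWeight Λ π α (X ω) r → r ≤ rhat ω) (v : ℝ) :
    {ω | v ≤ rhat ω} = X ⁻¹' stepUpGE Λ π α v := by
  ext ω
  exact le_iff_mem_stepUpGE hΛ (hself ω) (hmax ω) v

lemma measurable_of_rejectionWeight_eq [MeasurableSpace Ω] (hΛ : ∀ h, 0 ≤ Λ h)
    (hX : Measurable X)
    (hself : ∀ ω, rejectionWeight Λ π α (X ω) (rhat ω) = rhat ω)
    (hmax : ∀ ω, ∀ r, 0 ≤ r → r ≤ rejectionWeight Λ π α (X ω) r → r ≤ rhat ω) :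
    Measurable rhat :=
  measurable_of_Ici fun v => by
    change MeasurableSet {ω | v ≤ rhat ω}
    rw [setOf_le_eq_preimage_stepUpGE hΛ hself hmax]
    exact hX (measurableSet_stepUpGE v)

theorem lintegral_indicator_inv_stepUp_le [MeasurableSpace Ω] {P : Measure Ω}
    [IsProbabilityMeasure P] (hΛ : ∀ h, 0 ≤ Λ h) (hX : Measurable X)
    (hself : ∀ ω, rejectionWeight Λ π α (X ω) (rhat ω) = rhat ω)
    (hmax : ∀ ω, ∀ r, 0 ≤ r → r ≤ rejectionWeight Λ π α (X ω) r → r ≤ rhat ω)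
    {U : Ω → ℝ} (hU : Measurable U)
    (hUnif : ∀ t : ℝ, 0 ≤ t → t ≤ 1 → P {ω | U ω ≤ t} ≤ ENNReal.ofReal t)
    (hprds : ∀ D : Set (ι → ℝ), MeasurableSet D → IsUpperSet D →
      ∀ u u' : ℝ, u ≤ u' → 0 < P {ω | U ω ≤ u} →
        P {ω | X ω ∈ D ∧ U ω ≤ u} / P {ω | U ω ≤ u}
          ≤ P {ω | X ω ∈ D ∧ U ω ≤ u'} / P {ω | U ω ≤ u'})
    {c : ℝ} (hc : 0 ≤ c) :
    ∫⁻ ω, ENNReal.ofReal ({ω' | U ω' ≤ c * rhat ω}.indicator (fun _ => (rhat ω)⁻¹) ω) ∂P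
      ≤ ENNReal.ofReal c := by
  set V := (univ : Finset (Finset ι)).image fun T => ∑ g ∈ T, Λ g
  have hV0 : ∀ v ∈ V, 0 ≤ v := by
    simp only [V, Finset.mem_image, forall_exists_index, and_imp]
    rintro _ T _ rfl
    exact sum_nonneg fun g _ => hΛ g
  refine lintegral_indicator_inv_le (measurable_of_rejectionWeight_eq hΛ hX hself hmax)
    (fun v => measurableSet_le hU measurable_const) V
    (fun ω => Finset.mem_image.2 ⟨_, mem_univ _, hself ω⟩)
    (fun v hv => measure_le_ofReal_of_superuniform hUnif (mul_nonneg hc (hV0 v hv)))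
    fun v _ w _ hvw hv0 => ?_
  rw [setOf_le_eq_preimage_stepUpGE hΛ hself hmax]
  exact cond_preimage_le_of_isLowerSet hX hU hprds (measurableSet_stepUpGE w)
    (isLowerSet_stepUpGE hΛ w) (mul_le_mul_of_nonneg_left hvw hc) hv0

end StepUpProcedure

theorem FDR_control_weighted_linear_step_up_PRDS_general
    {Ω : Type*} [MeasurableSpace Ω] (P : Measure Ω) [IsProbabilityMeasure P]
    {ι : Type*} [Fintype ι] [DecidableEq ι]
    (H₀ : Finset ι) (Λ : ι → ℝ) (hΛ : ∀ h, 0 < Λ h)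
    (π : ι → ℝ) (hπ : ∀ h, π h ∈ Set.Icc (0:ℝ) 1) (α : ℝ) (hα : 0 < α)
    (p : ι → Ω → ℝ) (hp : ∀ h, Measurable (p h))
    (hUnif : ∀ h ∈ H₀, ∀ t : ℝ, 0 ≤ t → t ≤ 1 →
      P {ω | p h ω ≤ t} ≤ ENNReal.ofReal t)
    -- the p-values are PRDS on H₀ (conditioning form)
    (hPRDS : ∀ h ∈ H₀, ∀ D : Set (ι → ℝ), MeasurableSet D →
      (∀ z z' : ι → ℝ, z ∈ D → (∀ i, z i ≤ z' i) → z' ∈ D) →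
      ∀ u u' : ℝ, u ≤ u' → 0 < P {ω | p h ω ≤ u} →
        P {ω | (fun i => p i ω) ∈ D ∧ p h ω ≤ u} / P {ω | p h ω ≤ u}
          ≤ P {ω | (fun i => p i ω) ∈ D ∧ p h ω ≤ u'} / P {ω | p h ω ≤ u'})
    -- R is the step-up procedure for the threshold collection Δ(h,r) = α π(h) r
    (rhat : Ω → ℝ) (R : Ω → Finset ι)
    (hR : ∀ ω, R ω = Finset.univ.filter (fun h => p h ω ≤ α * π h * rhat ω))
    (hrhat0 : ∀ ω, 0 ≤ rhat ω)
    (hrhatmem : ∀ ω, rhat ω ≤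
      ∑ h ∈ Finset.univ.filter (fun h => p h ω ≤ α * π h * rhat ω), Λ h)
    (hrhatmax : ∀ ω, ∀ r : ℝ, 0 ≤ r →
      r ≤ ∑ h ∈ Finset.univ.filter (fun h => p h ω ≤ α * π h * r), Λ h →
      r ≤ rhat ω) :
    ∫⁻ ω, ENNReal.ofReal
        (if 0 < ∑ g ∈ R ω, Λ g
          then (∑ g ∈ R ω ∩ H₀, Λ g) / (∑ g ∈ R ω, Λ g) else 0) ∂P
      ≤ ENNReal.ofReal (α * ∑ h ∈ H₀, Λ h * π h) := by
  have hΛ0 : ∀ h, 0 ≤ Λ h := fun h => (hΛ h).le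
  have hπ0 : ∀ h, 0 ≤ π h := fun h => (hπ h).1
  have hX : Measurable fun ω i => p i ω := measurable_pi_lambda _ hp
  have hself : ∀ ω, rejectionWeight Λ π α (fun i => p i ω) (rhat ω) = rhat ω := fun ω =>
    apply_eq_of_forall_le_of_le_apply (rejectionWeight_mono hΛ0 hπ0 hα.le _) (hrhatmem ω)
      (hrhatmax ω) (rejectionWeight_nonneg hΛ0 _ _)
  have hR_sum : ∀ ω, ∑ g ∈ R ω, Λ g = rhat ω := fun ω => (hR ω).symm ▸ hself ω
  have hrhat : Measurable rhat := measurable_of_rejectionWeight_eq hΛ0 hX hself hrhatmax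
  have hFDP : ∀ ω, ENNReal.ofReal (if 0 < ∑ g ∈ R ω, Λ g
        then (∑ g ∈ R ω ∩ H₀, Λ g) / (∑ g ∈ R ω, Λ g) else 0)
      = ∑ h ∈ H₀, ENNReal.ofReal (Λ h) * ENNReal.ofReal
          ({ω' | p h ω' ≤ α * π h * rhat ω}.indicator (fun _ => (rhat ω)⁻¹) ω) := fun ω => by
    rw [ite_pos_sum_inter_div_eq_sum hΛ0, hR_sum,
      ofReal_sum_of_nonneg fun h _ =>
        mul_nonneg (hΛ0 h) (ite_nonneg (inv_nonneg.2 (hrhat0 ω)) le_rfl)]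
    refine sum_congr rfl fun h _ => ?_
    rw [ofReal_mul (hΛ0 h), hR ω]
    simp [indicator_apply]
  have hindicator : ∀ h, Measurable fun ω => ENNReal.ofReal
      ({ω' | p h ω' ≤ α * π h * rhat ω}.indicator (fun _ => (rhat ω)⁻¹) ω) := fun h =>
    (hrhat.inv.indicator (measurableSet_le (hp h) (measurable_const.mul hrhat))).ennreal_ofReal
  calc _ = ∑ h ∈ H₀, ENNReal.ofReal (Λ h) * ∫⁻ ω, ENNReal.ofReal
          ({ω' | p h ω' ≤ α * π h * rhat ω}.indicator (fun _ => (rhat ω)⁻¹) ω) ∂P := by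
        rw [lintegral_congr hFDP, lintegral_finsetSum _ fun h _ => (hindicator h).const_mul _]
        exact sum_congr rfl fun h _ => lintegral_const_mul _ (hindicator h)
    _ ≤ ∑ h ∈ H₀, ENNReal.ofReal (Λ h) * ENNReal.ofReal (α * π h) := by
        gcongr with h hh
        exact lintegral_indicator_inv_stepUp_le hΛ0 hX hself hrhatmax (hp h) (hUnif h hh)
          (fun D hD hup => hPRDS h hh D hD fun z z' hz hzz' => hup hzz' hz)
          (mul_nonneg hα.le (hπ0 h))
    _ = ENNReal.ofReal (α * ∑ h ∈ H₀, Λ h * π h) := by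
        rw [mul_sum, ofReal_sum_of_nonneg fun h _ => mul_nonneg hα.le (mul_nonneg (hΛ0 h) (hπ0 h))]
        refine sum_congr rfl fun h _ => ?_
        rw [← ofReal_mul (hΛ0 h)]
        ring_nf

/-- Theorem 4.1 (PRDS case): the π-weighted linear step-up procedure has its
Λ-weighted FDR bounded by `α Σ_{h∈H₀} Λ(h) π(h)` when the p-values are PRDS on
`H₀` (in the conditioning form). -/
theorem FDR_control_weighted_linear_step_up_PRDS
    {Ω : Type*} [MeasurableSpace Ω] (P : Measure Ω) [IsProbabilityMeasure P]
    {ι : Type*} [Fintype ι] [DecidableEq ι]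
    (H₀ : Finset ι) (Λ : ι → ℝ) (hΛ : ∀ h, 0 < Λ h)
    (π : ι → ℝ) (hπ : ∀ h, π h ∈ Set.Icc (0:ℝ) 1) (α : ℝ) (hα : 0 < α)
    (p : ι → Ω → ℝ) (hp : ∀ h, Measurable (p h))
    (hprange : ∀ h ω, p h ω ∈ Set.Icc (0:ℝ) 1)
    (hUnif : ∀ h ∈ H₀, ∀ t : ℝ, 0 ≤ t → t ≤ 1 →
      P {ω | p h ω ≤ t} ≤ ENNReal.ofReal t)
    -- the p-values are PRDS on H₀ (conditioning form)
    (hPRDS : ∀ h ∈ H₀, ∀ D : Set (ι → ℝ), MeasurableSet D →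
      (∀ z z' : ι → ℝ, z ∈ D → (∀ i, z i ≤ z' i) → z' ∈ D) →
      ∀ u u' : ℝ, u ≤ u' → 0 < P {ω | p h ω ≤ u} →
        P {ω | (fun i => p i ω) ∈ D ∧ p h ω ≤ u} / P {ω | p h ω ≤ u}
          ≤ P {ω | (fun i => p i ω) ∈ D ∧ p h ω ≤ u'} / P {ω | p h ω ≤ u'})
    -- R is the step-up procedure for the threshold collection Δ(h,r) = α π(h) r
    (rhat : Ω → ℝ) (R : Ω → Finset ι)
    (hR : ∀ ω, R ω = Finset.univ.filter (fun h => p h ω ≤ α * π h * rhat ω))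
    (hrhat0 : ∀ ω, 0 ≤ rhat ω)
    (hrhatmem : ∀ ω, rhat ω ≤
      ∑ h ∈ Finset.univ.filter (fun h => p h ω ≤ α * π h * rhat ω), Λ h)
    (hrhatmax : ∀ ω, ∀ r : ℝ, 0 ≤ r →
      r ≤ ∑ h ∈ Finset.univ.filter (fun h => p h ω ≤ α * π h * r), Λ h →
      r ≤ rhat ω) :
    ∫⁻ ω, ENNReal.ofReal
        (if 0 < ∑ g ∈ R ω, Λ g
          then (∑ g ∈ R ω ∩ H₀, Λ g) / (∑ g ∈ R ω, Λ g) else 0) ∂P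
      ≤ ENNReal.ofReal (α * ∑ h ∈ H₀, Λ h * π h) :=
  FDR_control_weighted_linear_step_up_PRDS_general P H₀ Λ hΛ π hπ α hα p hp hUnif hPRDS rhat R hR
    hrhat0 hrhatmem hrhatmax
end

section
/- (FDR control of the Benjamini–Liu-type step-down under PRDSS.) Let H be finite of cardinality m with m₀ = |H₀| > 0 true nulls (counting measure), p-values with P(p_h ≤ t) ≤ t for h ∈ H₀. Assume the p-values of H₁ are PRDSS on H₀: for every measurable nondecreasing D ⊆ [0,1]^{H₁} and every h₀ ∈ H₀, u ↦ P((p_h)_{h∈H₁} ∈ D | p_{h₀} ≤ u) is nondecreasing. Let R be the step-down procedure with threshold collection Δ(i) = α m/(m−i+1)², i.e., R rejects the hypotheses corresponding to p_(1), …, p_(k̂) where k̂ = max{k : ∀ j ≤ k, p_(j) ≤ Δ(j)} (k̂ = 0 if p_(1) > Δ(1)). Then FDR(R) ≤ α. -/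
/-!
Let `k₁` be the number of steps of the step-down procedure run on the false nulls `H₁ = H₀ᶜ`
alone, and `V = m - k₁`. If a true null is rejected, the smallest true-null p-value `p_{h₀}` has
rank `j₀ ≤ k₁ + 1` among all p-values and `p_{h₀} ≤ Δ(j₀) ≤ c / V` with `c = α m / m₀`, because
`(m - j₀ + 1)² ≥ m₀ V`; and since the at least `k₁` rejections of the procedure on `H₁` are also
rejections of `R`, the false discovery proportion is at most `V / m`. Hence `FDP ≤ ∑_{h₀ ∈ H₀} V 𝟙{p_{h₀} ≤ c / V} / m`.

Each event `{V ≥ v}` is a nondecreasing set of the p-values of `H₁`, so by PRDSS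
`u ↦ P(V ≥ v | p_{h₀} ≤ u)` is nondecreasing. With superuniformity this gives
`E[V 𝟙{p_{h₀} ≤ c / V}] ≤ c` by telescoping, and summing over `H₀` gives
`FDR ≤ m₀ c / m = α`.
-/

open MeasureTheory ENNReal Set Finset

theorem sum_Icc_mul_sub_le_of_div_le {a b β : ℕ → ℝ} {c : ℝ} (hb : ∀ v, 0 ≤ b v)
    (hba : ∀ v, b v ≤ a v) (haβ : ∀ v, a v ≤ β v) (hβ : ∀ v, v * β v ≤ c)
    (hab : ∀ v, 1 ≤ v → a (v + 1) / β (v + 1) ≤ b v / β v) (n : ℕ) :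
    ∑ v ∈ Icc 1 n, v * (a v - b v) ≤ c := by
  have hc : 0 ≤ c := by simpa using hβ 0
  have hβ0 : ∀ v, 0 ≤ β v := fun v => (hb v).trans ((hba v).trans (haβ v))
  have step : ∀ v, v * (a v - b v) ≤ c * (a v / β v - b v / β v) := by
    intro v
    have hdiv : b v / β v ≤ a v / β v := div_le_div_of_nonneg_right (hba v) (hβ0 v)
    have ha : a v / β v * β v = a v := div_mul_cancel_of_imp fun h => by
      linarith [h ▸ haβ v, hb v, hba v]
    have hb' : b v / β v * β v = b v := div_mul_cancel_of_imp fun h => by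
      linarith [h ▸ haβ v, hb v, hba v]
    calc v * (a v - b v) = v * β v * (a v / β v - b v / β v) := by
          linear_combination (-(v : ℝ)) * ha + (v : ℝ) * hb'
      _ ≤ c * (a v / β v - b v / β v) := mul_le_mul_of_nonneg_right (hβ v) (sub_nonneg.2 hdiv)
  -- these bounds telescope because `a (v + 1) / β (v + 1) ≤ b v / β v`
  have telescope : ∀ n,
      ∑ v ∈ Icc 1 n, v * (a v - b v) ≤ c * (a 1 / β 1 - a (n + 1) / β (n + 1)) := by
    intro n
    induction n with
    | zero => simp
    | succ n ih =>
      rw [sum_Icc_succ_top (by omega)]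
      nlinarith [step (n + 1), hab (n + 1) (by omega)]
  calc ∑ v ∈ Icc 1 n, v * (a v - b v) ≤ c * (a 1 / β 1 - a (n + 1) / β (n + 1)) := telescope n
    _ ≤ c * 1 := by
      gcongr
      have h1 : a 1 / β 1 ≤ 1 := div_le_one_of_le₀ (haβ 1) (hβ0 1)
      have h2 : 0 ≤ a (n + 1) / β (n + 1) := div_nonneg ((hb _).trans (hba _)) (hβ0 _)
      linarith
    _ = c := mul_one c

theorem measure_setOf_le_le_ofReal {Ω : Type*} [MeasurableSpace Ω] {μ : Measure Ω}
    [IsProbabilityMeasure μ] {U : Ω → ℝ}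
    (hU : ∀ t, 0 ≤ t → t ≤ 1 → μ {ω | U ω ≤ t} ≤ ENNReal.ofReal t) {t : ℝ} (ht : 0 ≤ t) :
    μ {ω | U ω ≤ t} ≤ ENNReal.ofReal t := by
  rcases le_total t 1 with ht1 | ht1
  · exact hU t ht ht1
  · exact prob_le_one.trans (ofReal_one ▸ ofReal_le_ofReal ht1)

section DependencyControl

variable {Ω : Type*} [MeasurableSpace Ω] {μ : Measure Ω} [IsFiniteMeasure μ]

theorem measureReal_div_le_of_measure_div_le {A A' B B' : Set Ω} (hA : A ⊆ B) (hB : B ⊆ B')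
    (h : 0 < μ B → μ A / μ B ≤ μ A' / μ B') :
    μ.real A / μ.real B ≤ μ.real A' / μ.real B' := by
  rcases eq_or_ne (μ B) 0 with hB0 | hB0
  · rw [measureReal_def, measure_mono_null hA hB0]
    simp only [toReal_zero, zero_div]
    positivity
  · have hpos : 0 < μ B := pos_iff_ne_zero.2 hB0
    have hfin : μ A' / μ B' ≠ ∞ :=
      div_ne_top (measure_ne_top _ _) (hpos.trans_le (measure_mono hB)).ne'
    simpa only [measureReal_def, toReal_div] using toReal_mono hfin (h hpos)

theorem lintegral_ite_eq_sum {ν : Measure Ω} {U : Ω → ℝ} {V : Ω → ℕ} {c : ℝ} {m : ℕ}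
    (hU : Measurable U) (hV : Measurable V) (hVm : ∀ ω, V ω ≤ m) :
    ∫⁻ ω, (if U ω ≤ c / V ω then (V ω : ℝ≥0∞) else 0) ∂ν
      = ∑ v ∈ Icc 1 m, (v : ℝ≥0∞) * ν {ω | V ω = v ∧ U ω ≤ c / v} := by
  have hE : ∀ v : ℕ, MeasurableSet {ω | V ω = v ∧ U ω ≤ c / v} := fun v =>
    (hV (measurableSet_singleton v)).inter (hU measurableSet_Iic)
  have hsplit : ∀ ω, (if U ω ≤ c / V ω then (V ω : ℝ≥0∞) else 0)
      = ∑ v ∈ Icc 1 m, {ω | V ω = v ∧ U ω ≤ c / v}.indicator (fun _ => (v : ℝ≥0∞)) ω := by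
    intro ω
    rcases Nat.eq_zero_or_pos (V ω) with h0 | hpos
    · simp only [h0, Nat.cast_zero, ite_self]
      refine (sum_eq_zero fun v hv => indicator_of_notMem (fun h => ?_) _).symm
      have := (Finset.mem_Icc.1 hv).1
      have := h.1
      omega
    · simp only [indicator_apply, mem_ofPred_eq, ite_and, sum_ite_eq, Finset.mem_Icc]
      rw [if_pos (show 1 ≤ V ω from hpos), if_pos (hVm ω)]
  rw [lintegral_congr hsplit, lintegral_finsetSum _ fun v _ => measurable_const.indicator (hE v)]
  simp_rw [lintegral_indicator_const (hE _)]

theorem lintegral_ite_le_of_condIncreasing {U : Ω → ℝ} {V : Ω → ℕ} {c : ℝ} {m : ℕ}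
    (hU : Measurable U) (hV : Measurable V) (hVm : ∀ ω, V ω ≤ m) (hc : 0 ≤ c)
    (hsup : ∀ t, 0 ≤ t → μ {ω | U ω ≤ t} ≤ ENNReal.ofReal t)
    (hcond : ∀ v : ℕ, ∀ u u' : ℝ, u ≤ u' → 0 < μ {ω | U ω ≤ u} →
      μ {ω | v ≤ V ω ∧ U ω ≤ u} / μ {ω | U ω ≤ u}
        ≤ μ {ω | v ≤ V ω ∧ U ω ≤ u'} / μ {ω | U ω ≤ u'}) :
    ∫⁻ ω, (if U ω ≤ c / V ω then (V ω : ℝ≥0∞) else 0) ∂μ ≤ ENNReal.ofReal c := by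
  set A : ℕ → ℕ → Set Ω := fun w v => {ω | w ≤ V ω ∧ U ω ≤ c / v}
  have hAsub : ∀ v, A (v + 1) v ⊆ A v v := fun v ω h => ⟨(Nat.le_succ v).trans h.1, h.2⟩
  have hEreal : ∀ v : ℕ,
      μ.real {ω | V ω = v ∧ U ω ≤ c / v} = μ.real (A v v) - μ.real (A (v + 1) v) := by
    intro v
    have hE : {ω | V ω = v ∧ U ω ≤ c / v} = A v v \ A (v + 1) v := by
      ext ω
      simp only [A, mem_sdiff, mem_ofPred_eq]
      by_cases hUv : U ω ≤ c / v <;> simp only [hUv, and_true, and_false, not_false_eq_true]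
      omega
    rw [hE, measureReal_sdiff (hAsub v) ((hV measurableSet_Ici).inter (hU measurableSet_Iic))]
  have hβ : ∀ v : ℕ, v * μ.real {ω | U ω ≤ c / v} ≤ c := by
    intro v
    rcases Nat.eq_zero_or_pos v with rfl | hv
    · simpa using hc
    have hv' : (0 : ℝ) < v := Nat.cast_pos.2 hv
    rw [← le_div_iff₀' hv', measureReal_def]
    exact toReal_le_of_le_ofReal (by positivity) (hsup _ (by positivity))
  have hab : ∀ v, 1 ≤ v → μ.real (A (v + 1) (v + 1)) / μ.real {ω | U ω ≤ c / ↑(v + 1)}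
      ≤ μ.real (A (v + 1) v) / μ.real {ω | U ω ≤ c / v} := by
    intro v hv
    have hle : c / ↑(v + 1) ≤ c / v :=
      div_le_div_of_nonneg_left hc (Nat.cast_pos.2 hv) (Nat.cast_le.2 (Nat.le_succ v))
    exact measureReal_div_le_of_measure_div_le (fun ω h => h.2) (fun ω h => h.trans hle)
      (hcond (v + 1) _ _ hle)
  rw [lintegral_ite_eq_sum hU hV hVm]
  calc ∑ v ∈ Icc 1 m, (v : ℝ≥0∞) * μ {ω | V ω = v ∧ U ω ≤ c / v}
      = ENNReal.ofReal (∑ v ∈ Icc 1 m, v * μ.real {ω | V ω = v ∧ U ω ≤ c / v}) := by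
        rw [ofReal_sum_of_nonneg fun v _ => by positivity]
        refine sum_congr rfl fun v _ => ?_
        rw [ofReal_mul (by positivity), ofReal_natCast, ofReal_measureReal]
    _ ≤ ENNReal.ofReal c := by
        refine ofReal_le_ofReal ?_
        simp_rw [hEreal]
        exact sum_Icc_mul_sub_le_of_div_le (fun _ => measureReal_nonneg)
          (fun v => measureReal_mono (hAsub v)) (fun v => measureReal_mono fun ω h => h.2) hβ hab m

end DependencyControl

section StepDown

variable {ι : Type*} (S : Finset ι) (Δ : ℕ → ℝ)

/-- `p_(j) ≤ Δ j` for `1 ≤ j ≤ k`, where `p_(j)` is the `j`-th smallest of the p-values `z h`,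
`h ∈ S`. -/
def StepDownAdmissible (z : ι → ℝ) (k : ℕ) : Prop :=
  ∀ j, 1 ≤ j → j ≤ k → j ≤ #{h ∈ S | z h ≤ Δ j}

namespace StepDownAdmissible

variable {S Δ} {z : ι → ℝ}

theorem zero : StepDownAdmissible S Δ z 0 := fun _ _ _ => by omega

theorem le_card {k : ℕ} (hk : StepDownAdmissible S Δ z k) : k ≤ #S := by
  rcases Nat.eq_zero_or_pos k with rfl | hpos
  · exact Nat.zero_le _
  · exact (hk k hpos le_rfl).trans (card_filter_le _ _)

theorem of_subset {T : Finset ι} {k : ℕ} (hST : S ⊆ T) (hk : StepDownAdmissible S Δ z k) :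
    StepDownAdmissible T Δ z k :=
  fun j hj hjk => (hk j hj hjk).trans (card_le_card (filter_subset_filter _ hST))

theorem of_le {z' : ι → ℝ} {k : ℕ} (hz : z ≤ z') (hk : StepDownAdmissible S Δ z' k) :
    StepDownAdmissible S Δ z k :=
  fun j hj hjk => (hk j hj hjk).trans
    (card_le_card (monotone_filter_right _ fun i _ hi => (hz i).trans hi))

theorem congr {z' : ι → ℝ} {k : ℕ} (h : ∀ i ∈ S, z i = z' i) :
    StepDownAdmissible S Δ z k ↔ StepDownAdmissible S Δ z' k := by
  have hfilter : ∀ j, {h ∈ S | z h ≤ Δ j} = {h ∈ S | z' h ≤ Δ j} :=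
    fun j => filter_congr fun i hi => by rw [h i hi]
  simp only [StepDownAdmissible, hfilter]

theorem measurableSet_setOf (k : ℕ) : MeasurableSet {z : ι → ℝ | StepDownAdmissible S Δ z k} := by
  classical
  simp only [StepDownAdmissible, Set.ofPred_forall]
  refine .iInter fun j => .iInter fun _ => .iInter fun _ => ?_
  have hcard : Measurable fun z : ι → ℝ => #{h ∈ S | z h ≤ Δ j} := by
    simp_rw [card_filter]
    exact Finset.measurable_sum _ fun h _ =>
      Measurable.ite (measurable_pi_apply h measurableSet_Iic) measurable_const measurable_const
  exact hcard measurableSet_Ici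

end StepDownAdmissible

open Classical in
noncomputable def stepDownRank (m : ℕ) (z : ι → ℝ) : ℕ :=
  Nat.findGreatest (StepDownAdmissible S Δ z) m

noncomputable def stepDownSet (m : ℕ) (z : ι → ℝ) : Finset ι :=
  {h ∈ S | z h ≤ Δ (stepDownRank S Δ m z)}

variable {S Δ} {m : ℕ} {z : ι → ℝ}

theorem stepDownRank_le : stepDownRank S Δ m z ≤ m := by
  classical
  exact Nat.findGreatest_le m

theorem stepDownAdmissible_stepDownRank : StepDownAdmissible S Δ z (stepDownRank S Δ m z) := by
  classical
  exact Nat.findGreatest_spec (Nat.zero_le m) StepDownAdmissible.zero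

theorem le_stepDownRank {n : ℕ} (hn : n ≤ m) (h : StepDownAdmissible S Δ z n) :
    n ≤ stepDownRank S Δ m z := by
  classical
  exact Nat.le_findGreatest hn h

theorem stepDownRank_eq {k : ℕ} (hk : k ≤ m) (hadm : StepDownAdmissible S Δ z k)
    (hmax : ∀ n ≤ m, StepDownAdmissible S Δ z n → n ≤ k) : stepDownRank S Δ m z = k :=
  le_antisymm (hmax _ stepDownRank_le stepDownAdmissible_stepDownRank) (le_stepDownRank hk hadm)

theorem antitone_stepDownRank : Antitone (stepDownRank S Δ m) := fun _ _ hz =>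
  le_stepDownRank stepDownRank_le (stepDownAdmissible_stepDownRank.of_le hz)

theorem stepDownRank_congr {z' : ι → ℝ} (h : ∀ i ∈ S, z i = z' i) :
    stepDownRank S Δ m z = stepDownRank S Δ m z' :=
  stepDownRank_eq stepDownRank_le ((StepDownAdmissible.congr h).2 stepDownAdmissible_stepDownRank)
    fun _ hn hadm => le_stepDownRank hn ((StepDownAdmissible.congr h).1 hadm)

theorem measurable_stepDownRank : Measurable (stepDownRank S Δ m) := by
  classical
  exact measurable_findGreatest fun k _ => StepDownAdmissible.measurableSet_setOf k

theorem measurable_sub_stepDownRank {Ω : Type*} [MeasurableSpace Ω] {p : ι → Ω → ℝ}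
    (hp : ∀ i, Measurable (p i)) : Measurable fun ω => m - stepDownRank S Δ m fun i => p i ω :=
  Measurable.of_discrete.comp (measurable_stepDownRank.comp (measurable_pi_lambda _ hp))

theorem stepDownRank_le_card_stepDownSet : stepDownRank S Δ m z ≤ #(stepDownSet S Δ m z) := by
  rcases Nat.eq_zero_or_pos (stepDownRank S Δ m z) with h | hpos
  · exact h ▸ Nat.zero_le _
  · exact stepDownAdmissible_stepDownRank _ hpos le_rfl

theorem card_stepDownSet (hS : #S ≤ m) (hΔ : MonotoneOn Δ (Set.Iic m)) :
    #(stepDownSet S Δ m z) = stepDownRank S Δ m z := by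
  refine le_antisymm ?_ stepDownRank_le_card_stepDownSet
  have hRm : #(stepDownSet S Δ m z) ≤ m := (card_filter_le _ _).trans hS
  refine le_stepDownRank hRm fun j hj hjR => ?_
  rcases le_or_gt j (stepDownRank S Δ m z) with hjk | hjk
  · exact stepDownAdmissible_stepDownRank j hj hjk
  · refine hjR.trans (card_le_card (monotone_filter_right _ fun i _ hi => hi.trans ?_))
    exact hΔ (mem_Iic.2 stepDownRank_le) (mem_Iic.2 (hjR.trans hRm)) hjk.le

theorem stepDownSet_subset_stepDownSet {T : Finset ι} (hST : S ⊆ T)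
    (hΔ : MonotoneOn Δ (Set.Iic m)) :
    stepDownSet S Δ m z ⊆ stepDownSet T Δ m z := by
  intro i hi
  rw [stepDownSet, mem_filter] at hi ⊢
  refine ⟨hST hi.1, hi.2.trans (hΔ (mem_Iic.2 stepDownRank_le) (mem_Iic.2 stepDownRank_le) ?_)⟩
  exact le_stepDownRank stepDownRank_le (stepDownAdmissible_stepDownRank.of_subset hST)

end StepDown

noncomputable def fdp {ι : Type*} [DecidableEq ι] (R H₀ : Finset ι) : ℝ :=
  if 0 < #R then (#(R ∩ H₀) : ℝ) / #R else 0

theorem fdp_le {ι : Type*} [DecidableEq ι] {R H₀ : Finset ι} {k m : ℕ} (hRm : #R ≤ m)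
    (hk : k ≤ #(R \ H₀)) : fdp R H₀ ≤ ((m - k : ℕ) : ℝ) / m := by
  unfold fdp
  split_ifs with hR
  · have hsplit := card_sdiff_add_card_inter R H₀
    have hqk : (#(R ∩ H₀) : ℝ) + k ≤ #R := by exact_mod_cast (by omega)
    have hRm' : (#R : ℝ) ≤ m := by exact_mod_cast hRm
    rw [div_le_div_iff₀ (by exact_mod_cast hR) (by exact_mod_cast hR.trans_le hRm),
      Nat.cast_sub (by omega)]
    nlinarith [mul_nonneg (Nat.cast_nonneg (α := ℝ) k) (sub_nonneg.2 hRm')]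
  · positivity

theorem monotoneOn_threshold {α : ℝ} (hα : 0 ≤ α) {m : ℕ} {Δ : ℕ → ℝ}
    (hΔ : ∀ i, Δ i = α * m / ((m : ℝ) - i + 1) ^ 2) : MonotoneOn Δ (Set.Iic m) := by
  intro i hi i' hi' hii'
  have hi'm : (i' : ℝ) ≤ m := by exact_mod_cast hi'
  have hii'' : (i : ℝ) ≤ i' := by exact_mod_cast hii'
  rw [hΔ, hΔ]
  exact div_le_div_of_nonneg_left (by positivity) (pow_pos (by linarith) 2)
    (pow_le_pow_left₀ (by linarith) (by linarith) 2)

theorem threshold_succ_le {α : ℝ} (hα : 0 ≤ α) {m m₀ j k : ℕ} (hm₀ : 0 < m₀) (hjk : j ≤ k)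
    (hk : k + m₀ ≤ m) :
    α * m / ((m : ℝ) - (j + 1 : ℕ) + 1) ^ 2 ≤ α * m / m₀ / (m - k : ℕ) := by
  have hm₀' : (0 : ℝ) < m₀ := by exact_mod_cast hm₀
  have hjk' : (j : ℝ) ≤ k := by exact_mod_cast hjk
  have hk' : (k : ℝ) + m₀ ≤ m := by exact_mod_cast hk
  rw [div_div, Nat.cast_sub (by omega)]
  push_cast
  exact div_le_div_of_nonneg_left (by positivity) (by nlinarith) (by nlinarith)

section FalseDiscoveries

variable {ι : Type*} [Fintype ι] [DecidableEq ι] {Δ : ℕ → ℝ} {m : ℕ} {z : ι → ℝ}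
  {H₀ : Finset ι}

theorem exists_le_stepDownRank_compl (hm : Fintype.card ι ≤ m) (hΔ : MonotoneOn Δ (Set.Iic m))
    {h₀ : ι} (hh₀ : h₀ ∈ H₀) (hmin : ∀ h ∈ H₀, z h₀ ≤ z h)
    (hR : h₀ ∈ stepDownSet Finset.univ Δ m z) :
    ∃ j ≤ stepDownRank H₀ᶜ Δ m z, z h₀ ≤ Δ (j + 1) := by
  -- `#B + 1` is the rank of `z h₀` among all p-values
  set B := {h ∈ H₀ᶜ | z h < z h₀}
  have hadm : StepDownAdmissible Finset.univ Δ z (stepDownRank Finset.univ Δ m z) :=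
    stepDownAdmissible_stepDownRank
  have hBR : insert h₀ B ⊆ stepDownSet Finset.univ Δ m z := insert_subset hR fun h hh =>
    mem_filter.2 ⟨mem_univ h, (mem_filter.1 hh).2.le.trans (mem_filter.1 hR).2⟩
  have hrank : #B + 1 ≤ stepDownRank Finset.univ Δ m z := by
    rw [← card_stepDownSet (by simpa using hm) hΔ,
      ← card_insert_of_notMem fun h => (mem_compl.1 (mem_filter.1 h).1) hh₀]
    exact card_le_card hBR
  have hbelow : ∀ j, Δ j < z h₀ →
      {h ∈ (Finset.univ : Finset ι) | z h ≤ Δ j} ⊆ {h ∈ H₀ᶜ | z h ≤ Δ j} := by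
    intro j hj h hh
    have hle := (mem_filter.1 hh).2
    exact mem_filter.2 ⟨mem_compl.2 fun hH => (hmin h hH).not_gt (hle.trans_lt hj), hle⟩
  have hBm : #B ≤ m := by
    have : stepDownRank Finset.univ Δ m z ≤ m := stepDownRank_le
    omega
  refine ⟨#B, le_stepDownRank hBm fun j hj hjB => ?_, ?_⟩
  · rcases le_or_gt (z h₀) (Δ j) with h | h
    · exact hjB.trans (card_le_card (monotone_filter_right _ fun i _ hi => hi.le.trans h))
    · exact (hadm j hj (by omega)).trans (card_le_card (hbelow j h))
  · by_contra! h
    have hsub : {h ∈ (Finset.univ : Finset ι) | z h ≤ Δ (#B + 1)} ⊆ B := fun i hi =>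
      mem_filter.2 ⟨(mem_filter.1 (hbelow _ h hi)).1, (mem_filter.1 hi).2.trans_lt h⟩
    have := (hadm (#B + 1) (by omega) hrank).trans (card_le_card hsub)
    omega

theorem ofReal_fdp_stepDownSet_le {α : ℝ} (hα : 0 ≤ α) (hm : Fintype.card ι = m)
    (hΔ : ∀ i, Δ i = α * m / ((m : ℝ) - i + 1) ^ 2) (hH₀ : H₀.Nonempty) (z : ι → ℝ) :
    ENNReal.ofReal (fdp (stepDownSet Finset.univ Δ m z) H₀)
      ≤ ∑ h₀ ∈ H₀, (m : ℝ≥0∞)⁻¹ *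
        if z h₀ ≤ α * m / #H₀ / (m - stepDownRank H₀ᶜ Δ m z : ℕ)
        then ((m - stepDownRank H₀ᶜ Δ m z : ℕ) : ℝ≥0∞) else 0 := by
  set R := stepDownSet Finset.univ Δ m z
  set k₁ := stepDownRank H₀ᶜ Δ m z
  have hΔmono := monotoneOn_threshold hα hΔ
  rcases (R ∩ H₀).eq_empty_or_nonempty with hRH₀ | ⟨h', hh'⟩
  · simp [fdp, hRH₀]
  obtain ⟨h₀, hh₀, hmin⟩ := exists_min_image H₀ z hH₀
  have hR₀ : h₀ ∈ R := mem_filter.2 ⟨mem_univ _,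
    (hmin h' (mem_inter.1 hh').2).trans (mem_filter.1 (mem_inter.1 hh').1).2⟩
  obtain ⟨j, hj, hz⟩ := exists_le_stepDownRank_compl hm.le hΔmono hh₀ hmin hR₀
  have hk₁ : k₁ + #H₀ ≤ m := by
    have := (stepDownAdmissible_stepDownRank (S := H₀ᶜ) (Δ := Δ) (m := m) (z := z)).le_card
    rw [card_compl, hm] at this
    have := card_le_univ H₀
    omega
  have hthr : z h₀ ≤ α * m / #H₀ / (m - k₁ : ℕ) :=
    hz.trans ((hΔ _).trans_le (threshold_succ_le hα (card_pos.2 hH₀) hj hk₁))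
  have hR₁ : stepDownSet H₀ᶜ Δ m z ⊆ R \ H₀ := subset_sdiff.2
    ⟨stepDownSet_subset_stepDownSet (subset_univ _) hΔmono,
      disjoint_of_subset_left (filter_subset _ _) disjoint_compl_left⟩
  have hfdp : fdp R H₀ ≤ ((m - k₁ : ℕ) : ℝ) / m :=
    fdp_le (hm ▸ card_le_univ R) (stepDownRank_le_card_stepDownSet.trans (card_le_card hR₁))
  have hm0 : (0 : ℝ) < m := Nat.cast_pos.2 (by have := card_pos.2 hH₀; omega)
  calc ENNReal.ofReal (fdp R H₀) ≤ ENNReal.ofReal (((m - k₁ : ℕ) : ℝ) / m) := ofReal_le_ofReal hfdp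
    _ = (m : ℝ≥0∞)⁻¹ *
        if z h₀ ≤ α * m / #H₀ / (m - k₁ : ℕ) then ((m - k₁ : ℕ) : ℝ≥0∞) else 0 := by
      rw [if_pos hthr, ofReal_div_of_pos hm0, ofReal_natCast, ofReal_natCast,
        ENNReal.div_eq_inv_mul]
    _ ≤ _ := single_le_sum (f := fun h₀ => (m : ℝ≥0∞)⁻¹ *
        if z h₀ ≤ α * m / #H₀ / (m - k₁ : ℕ) then ((m - k₁ : ℕ) : ℝ≥0∞) else 0)
      (fun _ _ => zero_le) hh₀

end FalseDiscoveries

theorem lintegral_ite_sub_stepDownRank_le {Ω ι : Type*} [MeasurableSpace Ω] {P : Measure Ω}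
    [IsProbabilityMeasure P] [Fintype ι] [DecidableEq ι] {p : ι → Ω → ℝ}
    (hp : ∀ i, Measurable (p i)) {H₀ : Finset ι} {h₀ : ι} {Δ : ℕ → ℝ} {m : ℕ} {c : ℝ}
    (hc : 0 ≤ c) (hunif : ∀ t : ℝ, 0 ≤ t → t ≤ 1 → P {ω | p h₀ ω ≤ t} ≤ ENNReal.ofReal t)
    (hPRDS : ∀ D : Set (ι → ℝ), MeasurableSet D →
      (∀ z z' : ι → ℝ, z ∈ D → (∀ i, z i ≤ z' i) → z' ∈ D) →
      (∀ z z' : ι → ℝ, (∀ h ∉ H₀, z h = z' h) → (z ∈ D ↔ z' ∈ D)) →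
      ∀ u u' : ℝ, u ≤ u' → 0 < P {ω | p h₀ ω ≤ u} →
        P {ω | (fun i => p i ω) ∈ D ∧ p h₀ ω ≤ u} / P {ω | p h₀ ω ≤ u}
          ≤ P {ω | (fun i => p i ω) ∈ D ∧ p h₀ ω ≤ u'} / P {ω | p h₀ ω ≤ u'}) :
    ∫⁻ ω, (if p h₀ ω ≤ c / (m - stepDownRank H₀ᶜ Δ m fun i => p i ω : ℕ)
      then ((m - stepDownRank H₀ᶜ Δ m fun i => p i ω : ℕ) : ℝ≥0∞) else 0) ∂P
      ≤ ENNReal.ofReal c := by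
  refine lintegral_ite_le_of_condIncreasing (hp h₀) (measurable_sub_stepDownRank hp)
    (fun ω => Nat.sub_le _ _) hc (fun t ht => measure_setOf_le_le_ofReal hunif ht) fun v => ?_
  exact hPRDS {z | v ≤ m - stepDownRank H₀ᶜ Δ m z}
    (measurable_stepDownRank (MeasurableSet.of_discrete (s := {n | v ≤ m - n})))
    (fun z z' hz hzz' => hz.trans (Nat.sub_le_sub_left (antitone_stepDownRank hzz') m))
    fun z z' hzz' => by
      rw [mem_ofPred_eq, mem_ofPred_eq, stepDownRank_congr fun i hi => hzz' i (mem_compl.1 hi)]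

theorem FDR_control_step_down_PRDSS_general
    {Ω : Type*} [MeasurableSpace Ω] (P : Measure Ω) [IsProbabilityMeasure P]
    {ι : Type*} [Fintype ι] [DecidableEq ι]
    (m : ℕ) (hmcard : Fintype.card ι = m)
    (H₀ : Finset ι) (hH₀ : H₀.Nonempty)
    (α : ℝ) (hα : 0 < α)
    (p : ι → Ω → ℝ) (hp : ∀ h, Measurable (p h))
    (hUnif : ∀ h ∈ H₀, ∀ t : ℝ, 0 ≤ t → t ≤ 1 →
      P {ω | p h ω ≤ t} ≤ ENNReal.ofReal t)
    -- the p-values of H₁ are PRDSS on H₀: for every measurable nondecreasing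
    -- set D depending only on the coordinates of H₁ = H \ H₀, and every
    -- h₀ ∈ H₀, u ↦ P(p ∈ D | p_{h₀} ≤ u) is nondecreasing
    (hPRDSS : ∀ h₀ ∈ H₀, ∀ D : Set (ι → ℝ), MeasurableSet D →
      (∀ z z' : ι → ℝ, z ∈ D → (∀ i, z i ≤ z' i) → z' ∈ D) →
      (∀ z z' : ι → ℝ, (∀ h ∉ H₀, z h = z' h) → (z ∈ D ↔ z' ∈ D)) →
      ∀ u u' : ℝ, u ≤ u' → 0 < P {ω | p h₀ ω ≤ u} →
        P {ω | (fun i => p i ω) ∈ D ∧ p h₀ ω ≤ u} / P {ω | p h₀ ω ≤ u}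
          ≤ P {ω | (fun i => p i ω) ∈ D ∧ p h₀ ω ≤ u'} / P {ω | p h₀ ω ≤ u'})
    -- threshold collection Δ(i) = α m / (m − i + 1)²
    (Δ : ℕ → ℝ) (hΔ : ∀ i, Δ i = α * m / ((m : ℝ) - i + 1) ^ 2)
    -- R is the associated step-down procedure
    (khat : Ω → ℕ) (R : Ω → Finset ι)
    (hkle : ∀ ω, khat ω ≤ m)
    (hkmem : ∀ ω, ∀ j, 1 ≤ j → j ≤ khat ω →
      j ≤ (Finset.univ.filter (fun h => p h ω ≤ Δ j)).card)
    (hkmax : ∀ ω, ∀ k, k ≤ m →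
      (∀ j, 1 ≤ j → j ≤ k →
        j ≤ (Finset.univ.filter (fun h => p h ω ≤ Δ j)).card) → k ≤ khat ω)
    (hR : ∀ ω, R ω = Finset.univ.filter (fun h => p h ω ≤ Δ (khat ω))) :
    ∫⁻ ω, ENNReal.ofReal
        (if 0 < (R ω).card
          then ((R ω ∩ H₀).card : ℝ) / ((R ω).card : ℝ) else 0) ∂P
      ≤ ENNReal.ofReal α := by
  set c := α * m / #H₀
  set V : Ω → ℕ := fun ω => m - stepDownRank H₀ᶜ Δ m fun i => p i ω
  have hRstep : ∀ ω, R ω = stepDownSet Finset.univ Δ m fun i => p i ω := fun ω => by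
    rw [hR, ← stepDownRank_eq (hkle ω) (hkmem ω) (hkmax ω)]
    rfl
  have hV : Measurable V := measurable_sub_stepDownRank hp
  have hmeas : ∀ h₀, Measurable fun ω => if p h₀ ω ≤ c / V ω then (V ω : ℝ≥0∞) else 0 :=
    fun h₀ => Measurable.ite (measurableSet_le (hp h₀) (by fun_prop)) (by fun_prop) measurable_const
  have hm₀ : (0 : ℝ) < #H₀ := Nat.cast_pos.2 (card_pos.2 hH₀)
  have hm : (0 : ℝ) < m := hm₀.trans_le (by exact_mod_cast hmcard ▸ card_le_univ H₀)
  calc ∫⁻ ω, ENNReal.ofReal (fdp (R ω) H₀) ∂P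
      ≤ ∫⁻ ω, ∑ h₀ ∈ H₀, (m : ℝ≥0∞)⁻¹ *
          (if p h₀ ω ≤ c / V ω then (V ω : ℝ≥0∞) else 0) ∂P :=
        lintegral_mono fun ω => hRstep ω ▸ ofReal_fdp_stepDownSet_le hα.le hmcard hΔ hH₀ _
    _ = ∑ h₀ ∈ H₀, (m : ℝ≥0∞)⁻¹ *
          ∫⁻ ω, (if p h₀ ω ≤ c / V ω then (V ω : ℝ≥0∞) else 0) ∂P := by
        rw [lintegral_finsetSum _ fun h₀ _ => (hmeas h₀).const_mul _]
        simp_rw [lintegral_const_mul _ (hmeas _)]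
    _ ≤ ∑ _h₀ ∈ H₀, (m : ℝ≥0∞)⁻¹ * ENNReal.ofReal c := by
        gcongr with h₀ hh₀
        exact lintegral_ite_sub_stepDownRank_le hp (by positivity) (hUnif h₀ hh₀) (hPRDSS h₀ hh₀)
    _ = ENNReal.ofReal α := by
        rw [sum_const, nsmul_eq_mul, ← ofReal_natCast, ← ofReal_natCast m, ← ofReal_inv_of_pos hm,
          ← ofReal_mul (by positivity), ← ofReal_mul (by positivity)]
        congr 1
        simp only [c]
        field_simp

/-- Theorem 4.6 (first part): FDR control of the Benjamini–Liu-type step-down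
procedure with threshold collection `Δ(i) = α m/(m−i+1)²` under the PRDSS
assumption of `H₁` on `H₀`. Here `khat` is the number of steps of the
step-down procedure: the largest `k ≤ m` such that for every `1 ≤ j ≤ k` at
least `j` p-values are below `Δ(j)` (equivalently `p_(j) ≤ Δ(j)` for all
`j ≤ k`), and `R` rejects the hypotheses with p-value at most `Δ(khat)`. -/
theorem FDR_control_step_down_PRDSS
    {Ω : Type*} [MeasurableSpace Ω] (P : Measure Ω) [IsProbabilityMeasure P]
    {ι : Type*} [Fintype ι] [DecidableEq ι]
    (m : ℕ) (hmcard : Fintype.card ι = m)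
    (H₀ : Finset ι) (hH₀ : H₀.Nonempty)
    (α : ℝ) (hα : 0 < α)
    (p : ι → Ω → ℝ) (hp : ∀ h, Measurable (p h))
    (hprange : ∀ h ω, p h ω ∈ Set.Icc (0:ℝ) 1)
    (hUnif : ∀ h ∈ H₀, ∀ t : ℝ, 0 ≤ t → t ≤ 1 →
      P {ω | p h ω ≤ t} ≤ ENNReal.ofReal t)
    -- the p-values of H₁ are PRDSS on H₀: for every measurable nondecreasing
    -- set D depending only on the coordinates of H₁ = H \ H₀, and every
    -- h₀ ∈ H₀, u ↦ P(p ∈ D | p_{h₀} ≤ u) is nondecreasing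
    (hPRDSS : ∀ h₀ ∈ H₀, ∀ D : Set (ι → ℝ), MeasurableSet D →
      (∀ z z' : ι → ℝ, z ∈ D → (∀ i, z i ≤ z' i) → z' ∈ D) →
      (∀ z z' : ι → ℝ, (∀ h ∉ H₀, z h = z' h) → (z ∈ D ↔ z' ∈ D)) →
      ∀ u u' : ℝ, u ≤ u' → 0 < P {ω | p h₀ ω ≤ u} →
        P {ω | (fun i => p i ω) ∈ D ∧ p h₀ ω ≤ u} / P {ω | p h₀ ω ≤ u}
          ≤ P {ω | (fun i => p i ω) ∈ D ∧ p h₀ ω ≤ u'} / P {ω | p h₀ ω ≤ u'})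
    -- threshold collection Δ(i) = α m / (m − i + 1)²
    (Δ : ℕ → ℝ) (hΔ : ∀ i, Δ i = α * m / ((m : ℝ) - i + 1) ^ 2)
    -- R is the associated step-down procedure
    (khat : Ω → ℕ) (R : Ω → Finset ι)
    (hkle : ∀ ω, khat ω ≤ m)
    (hkmem : ∀ ω, ∀ j, 1 ≤ j → j ≤ khat ω →
      j ≤ (Finset.univ.filter (fun h => p h ω ≤ Δ j)).card)
    (hkmax : ∀ ω, ∀ k, k ≤ m →
      (∀ j, 1 ≤ j → j ≤ k →
        j ≤ (Finset.univ.filter (fun h => p h ω ≤ Δ j)).card) → k ≤ khat ω)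
    (hR : ∀ ω, R ω = Finset.univ.filter (fun h => p h ω ≤ Δ (khat ω))) :
    ∫⁻ ω, ENNReal.ofReal
        (if 0 < (R ω).card
          then ((R ω ∩ H₀).card : ℝ) / ((R ω).card : ℝ) else 0) ∂P
      ≤ ENNReal.ofReal α :=
  FDR_control_step_down_PRDSS_general P m hmcard H₀ hH₀ α hα p hp hUnif hPRDSS Δ hΔ khat R hkle
    hkmem hkmax hR
end
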